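/- arXiv:2209.00888 — 10 statements merged into one kernel-verified Lean document; each statement's English description precedes it below -/
import Mathlib

section
/- There exist unique smooth functions s^{m−d}, …, s^{m−1} : ℝ × ℝ^{m−d−1} → ℝ such that the map β : ℝ × ℝ^{m−d−1} → ℝ^N defined by β(t, u^1, …, u^{m−d−1}) = γ(t) + Σ_{j=1}^{m−d−1} u^j X_j(t) + Σ_{h=m−d}^{m−1} s^h(t,u) X_h(t) satisfies ⟨(∂β/∂t)(t,u), ρ_t X_h⟩ = 0 for every h ∈ {m−d, …, m−1} and every (t,u) ∈ ℝ × ℝ^{m−d−1}. (β is the striction submanifold of the ruled submanifold σ.) -/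
/-!
Since `Xₖ(t) ∈ D_t` and `ρ_t X_h ∈ D_tᗮ`, only the `D_tᗮ`-components of the derivatives survive
in `⟨∂β/∂t, ρ_t X_h⟩`, and that component of `Ẋ_j` is `ρ_t X_j`. The striction condition is thus
the linear system `Σᵢ ⟨ρ_t X_h, ρ_t X_i⟩ sⁱ = -(⟨γ̇, ρ_t X_h⟩ + Σⱼ uʲ ⟨ρ_t X_j, ρ_t X_h⟩)`, whose
matrix is the Gram matrix of the linearly independent `ρ_t X_{m-d}, …, ρ_t X_{m-1}`, hence
invertible. Cramer's rule gives the unique solution, smooth because it is a rational expression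
in smooth data with nowhere vanishing denominator.
-/

open scoped RealInnerProductSpace Matrix
open Submodule Set

section Projection

variable {E : Type*} [NormedAddCommGroup E] [InnerProductSpace ℝ E]

theorem Submodule.inner_starProjection_eq_inner_starProjection_starProjection
    (U : Submodule ℝ E) [U.HasOrthogonalProjection] (x y : E) :
    ⟪x, U.starProjection y⟫ = ⟪U.starProjection x, U.starProjection y⟫ := by
  have h := inner_left_of_mem_orthogonal (U.starProjection_apply_mem y)
    (U.sub_starProjection_mem_orthogonal x)
  rwa [inner_sub_left, sub_eq_zero] at h

theorem Submodule.inner_deriv_sum_smul_starProjection_orthogonal (K : Submodule ℝ E)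
    [K.HasOrthogonalProjection] {κ : Type*} [Fintype κ] {a : κ → ℝ → ℝ} {f : κ → ℝ → E} {t : ℝ}
    (ha : ∀ k, DifferentiableAt ℝ (a k) t) (hf : ∀ k, DifferentiableAt ℝ (f k) t)
    (hfK : ∀ k, f k t ∈ K) (y : E) :
    ⟪deriv (fun τ => ∑ k, a k τ • f k τ) t, Kᗮ.starProjection y⟫ =
      ∑ k, a k t * ⟪Kᗮ.starProjection (deriv (f k) t), Kᗮ.starProjection y⟫ := by
  rw [deriv_fun_sum (A := fun k τ => a k τ • f k τ) fun k _ => (ha k).smul (hf k), sum_inner]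
  refine Finset.sum_congr rfl fun k _ => ?_
  have hfy : ⟪f k t, Kᗮ.starProjection y⟫ = 0 :=
    inner_right_of_mem_orthogonal (hfK k) (Kᗮ.starProjection_apply_mem y)
  rw [deriv_fun_smul (ha k) (hf k), inner_add_left, real_inner_smul_left, real_inner_smul_left,
    hfy, mul_zero, add_zero, inner_starProjection_eq_inner_starProjection_starProjection]

theorem Submodule.inner_deriv_ruled_eq_zero_iff_gram_mulVec (K : Submodule ℝ E)
    [K.HasOrthogonalProjection] {ι κ μ : Type*} [Fintype κ] [Fintype μ] {γ : ℝ → E}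
    {X : ι → ℝ → E} {ρ : ι → E} {jdx : κ → ι} {idx : μ → ι} {u : κ → ℝ} {a : μ → ℝ → ℝ}
    {t : ℝ} (hγ : DifferentiableAt ℝ γ t) (hX : ∀ i, DifferentiableAt ℝ (X i) t)
    (ha : ∀ i, DifferentiableAt ℝ (a i) t) (hXK : ∀ i, X i t ∈ K)
    (hρ : ∀ i, ρ i = Kᗮ.starProjection (deriv (X i) t)) (h : μ) :
    ⟪deriv (fun τ => γ τ + ∑ j, u j • X (jdx j) τ + ∑ i, a i τ • X (idx i) τ) t, ρ (idx h)⟫ = 0 ↔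
      (Matrix.gram ℝ (fun i => ρ (idx i)) *ᵥ fun i => a i t) h =
        -(⟪deriv γ t, ρ (idx h)⟫ + ∑ j, u j * ⟪ρ (jdx j), ρ (idx h)⟫) := by
  rw [deriv_fun_add (by fun_prop) (by fun_prop), deriv_fun_add (by fun_prop) (by fun_prop),
    inner_add_left, inner_add_left, hρ,
    K.inner_deriv_sum_smul_starProjection_orthogonal (fun _ => differentiableAt_const _)
      (fun _ => hX _) (fun _ => hXK _),
    K.inner_deriv_sum_smul_starProjection_orthogonal ha (fun _ => hX _) (fun _ => hXK _)]
  simp only [← hρ, Matrix.mulVec, dotProduct, Matrix.gram_apply, real_inner_comm (ρ (idx h)),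
    mul_comm (a _ t)]
  rw [eq_neg_iff_add_eq_zero, add_comm]

variable [FiniteDimensional ℝ E] {ι : Type*} [Fintype ι]

theorem Orthonormal.starProjection_span_eq_sum {v : ι → E} (hv : Orthonormal ℝ v) (x : E) :
    (span ℝ (range v)).starProjection x = ∑ i, ⟪v i, x⟫ • v i := by
  refine eq_starProjection_of_mem_orthogonal'
    (sum_mem fun i _ => smul_mem _ _ (subset_span (mem_range_self i))) ?_
    (add_sub_cancel _ _).symm
  rw [mem_orthogonal]
  intro w hw
  induction hw using span_induction with
  | mem w hw =>
    obtain ⟨k, rfl⟩ := hw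
    rw [inner_sub_right, hv.inner_right_sum _ (Finset.mem_univ k), sub_self]
  | zero => exact inner_zero_left _
  | add w₁ w₂ _ _ h₁ h₂ => rw [inner_add_left, h₁, h₂, add_zero]
  | smul a w _ h => rw [real_inner_smul_left, h, mul_zero]

theorem ContDiff.starProjection_orthogonal_span {F : Type*} [NormedAddCommGroup F]
    [NormedSpace ℝ F] {n : WithTop ℕ∞} {v : ι → F → E} {y : F → E}
    (hv : ∀ i, ContDiff ℝ n (v i)) (hon : ∀ p, Orthonormal ℝ fun i => v i p)
    (hy : ContDiff ℝ n y) :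
    ContDiff ℝ n fun p => (span ℝ (range fun i => v i p))ᗮ.starProjection (y p) := by
  simp_rw [starProjection_orthogonal_val, (hon _).starProjection_span_eq_sum]
  exact hy.sub (ContDiff.sum fun i _ => ((hv i).inner ℝ hy).smul (hv i))

end Projection

section Cramer

variable {P : Type*} [NormedAddCommGroup P] [NormedSpace ℝ P] {n : WithTop ℕ∞}
  {ι : Type*} [Fintype ι] [DecidableEq ι]

theorem ContDiff.matrix_det {A : P → Matrix ι ι ℝ} (hA : ∀ i j, ContDiff ℝ n fun p => A p i j) :
    ContDiff ℝ n fun p => (A p).det := by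
  simp only [Matrix.det_apply']
  exact ContDiff.sum fun σ _ => contDiff_const.mul (contDiff_prod fun i _ => hA (σ i) i)

theorem existsUnique_contDiff_mulVec_eq {A : P → Matrix ι ι ℝ} {b : P → ι → ℝ}
    (hA : ∀ i j, ContDiff ℝ n fun p => A p i j) (hdet : ∀ p, IsUnit (A p).det)
    (hb : ∀ i, ContDiff ℝ n fun p => b p i) :
    ∃! s : ι → P → ℝ, (∀ i, ContDiff ℝ n (s i)) ∧ ∀ p, A p *ᵥ (fun i => s i p) = b p := by
  have hsol : ∀ p, A p *ᵥ ((A p).det⁻¹ • (A p).cramer (b p)) = b p := fun p => by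
    rw [Matrix.mulVec_smul, Matrix.mulVec_cramer, smul_smul, inv_mul_cancel₀ (hdet p).ne_zero,
      one_smul]
  refine ⟨fun i p => ((A p).det⁻¹ • (A p).cramer (b p)) i, ⟨fun i => ?_, hsol⟩, ?_⟩
  · simp only [Pi.smul_apply, smul_eq_mul, Matrix.cramer_apply]
    refine ((ContDiff.matrix_det hA).inv fun p => (hdet p).ne_zero).mul
      (ContDiff.matrix_det fun k l => ?_)
    simp only [Matrix.updateCol_apply]
    split_ifs
    exacts [hb k, hA k l]
  · rintro s ⟨-, hs⟩
    funext i p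
    have hinj := Matrix.mulVec_injective_iff_isUnit.mpr
      ((Matrix.isUnit_iff_isUnit_det _).mpr (hdet p))
    exact congrFun (hinj ((hs p).trans (hsol p).symm)) i

end Cramer

theorem stmt_3_general (m n d : ℕ)
    (γ : ℝ → EuclideanSpace ℝ (Fin (m + n)))
    (X : Fin (m - 1) → ℝ → EuclideanSpace ℝ (Fin (m + n)))
    (hγ : ContDiff ℝ (⊤ : ℕ∞) γ)
    (hX : ∀ j, ContDiff ℝ (⊤ : ℕ∞) (X j))
    (hON : ∀ t, Orthonormal ℝ (fun j => X j t))
    (D : ℝ → Submodule ℝ (EuclideanSpace ℝ (Fin (m + n))))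
    (hD : ∀ t, D t = Submodule.span ℝ (Set.range fun j => X j t))
    (ρ : ℝ → Fin (m - 1) → EuclideanSpace ℝ (Fin (m + n)))
    (hρ : ∀ t j, ρ t j = ↑(Submodule.orthogonalProjectionOnto (D t)ᗮ (deriv (X j) t)))
    -- index maps: `jdx` enumerates `{1, …, m-d-1}`, `idx` enumerates `{m-d, …, m-1}`
    (jdx : Fin (m - d - 1) → Fin (m - 1))
    (idx : Fin d → Fin (m - 1))
    -- degree-`d` assumptions
    (hind : ∀ t, LinearIndependent ℝ fun k => ρ t (idx k)) :
    ∃! s : Fin d → ℝ × (Fin (m - d - 1) → ℝ) → ℝ,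
      (∀ h, ContDiff ℝ (⊤ : ℕ∞) (s h)) ∧
      ∀ (h : Fin d) (t : ℝ) (u : Fin (m - d - 1) → ℝ),
        ⟪deriv (fun τ =>
            γ τ + (∑ j, u j • X (jdx j) τ) + ∑ i, s i (τ, u) • X (idx i) τ) t,
          ρ t (idx h)⟫ = 0 := by
  simp only [hD, ← starProjection_apply] at hρ
  obtain ⟨hγd, hγ₁⟩ := contDiff_infty_iff_deriv.mp hγ
  have hXd : ∀ j, Differentiable ℝ (X j) := fun j => (hX j).differentiable (by simp)
  have hρ_smooth : ∀ j, ContDiff ℝ (⊤ : ℕ∞) fun t => ρ t j := fun j => by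
    simp only [hρ]
    exact .starProjection_orthogonal_span hX hON (contDiff_infty_iff_deriv.mp (hX j)).2
  have hρρ : ∀ j k, ContDiff ℝ (⊤ : ℕ∞)
      fun p : ℝ × (Fin (m - d - 1) → ℝ) => ⟪ρ p.1 j, ρ p.1 k⟫ :=
    fun j k => ((hρ_smooth j).inner ℝ (hρ_smooth k)).comp contDiff_fst
  have hdet : ∀ t, IsUnit (Matrix.gram ℝ fun i => ρ t (idx i)).det := fun t =>
    (Matrix.posDef_gram_of_linearIndependent (hind t)).det_pos.ne'.isUnit
  have hsystem := existsUnique_contDiff_mulVec_eq (P := ℝ × (Fin (m - d - 1) → ℝ))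
    (A := fun p => Matrix.gram ℝ fun i => ρ p.1 (idx i))
    (b := fun p h => -(⟪deriv γ p.1, ρ p.1 (idx h)⟫ + ∑ j, p.2 j * ⟪ρ p.1 (jdx j), ρ p.1 (idx h)⟫))
    (fun i j => hρρ _ _) (fun p => hdet p.1)
    (fun h => (((hγ₁.inner ℝ (hρ_smooth _)).comp contDiff_fst).add (ContDiff.sum fun j _ =>
      ((contDiff_apply ℝ ℝ j).comp contDiff_snd).mul (hρρ _ _))).neg)
  refine (existsUnique_congr fun s => and_congr_right fun hs => ?_).mp hsystem
  simp only [funext_iff, Prod.forall]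
  conv_rhs => rw [forall_comm]
  refine forall_congr' fun t => ?_
  conv_rhs => rw [forall_comm]
  refine forall₂_congr fun u h => ?_
  have hsd : ∀ i, Differentiable ℝ (s i) := fun i => (hs i).differentiable (by simp)
  exact ((span ℝ (range fun k => X k t)).inner_deriv_ruled_eq_zero_iff_gram_mulVec
    (a := fun i τ => s i (τ, u)) (hγd t) (fun i => hXd i t) (fun i => by fun_prop)
    (fun j => subset_span (mem_range_self j)) (hρ t) h).symm

/-- Under the degree-`d` assumptions, there exist unique smooth functions
`s^{m-d}, …, s^{m-1} : ℝ × ℝ^{m-d-1} → ℝ` such that the striction submanifold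
`β(t,u) = γ(t) + Σⱼ uʲ Xⱼ(t) + Σ_h s^h(t,u) X_h(t)` satisfies
`⟨∂β/∂t, ρ_t X_h⟩ = 0` for every `h ∈ {m-d, …, m-1}` and every `(t,u)`. -/
theorem stmt_3 (m n d : ℕ) (hm : 2 ≤ m) (hn : 1 ≤ n) (hd1 : 1 ≤ d) (hd2 : d ≤ m - 1)
    (γ : ℝ → EuclideanSpace ℝ (Fin (m + n)))
    (X : Fin (m - 1) → ℝ → EuclideanSpace ℝ (Fin (m + n)))
    (hγ : ContDiff ℝ (⊤ : ℕ∞) γ) (hγ' : ∀ t, ‖deriv γ t‖ = 1)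
    (hX : ∀ j, ContDiff ℝ (⊤ : ℕ∞) (X j))
    (hON : ∀ t, Orthonormal ℝ (fun j => X j t))
    (D : ℝ → Submodule ℝ (EuclideanSpace ℝ (Fin (m + n))))
    (hD : ∀ t, D t = Submodule.span ℝ (Set.range fun j => X j t))
    (ρ : ℝ → Fin (m - 1) → EuclideanSpace ℝ (Fin (m + n)))
    (hρ : ∀ t j, ρ t j = ↑(Submodule.orthogonalProjectionOnto (D t)ᗮ (deriv (X j) t)))
    -- index maps: `jdx` enumerates `{1, …, m-d-1}`, `idx` enumerates `{m-d, …, m-1}`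
    (jdx : Fin (m - d - 1) → Fin (m - 1)) (hjdx : ∀ j, (jdx j : ℕ) = (j : ℕ))
    (idx : Fin d → Fin (m - 1)) (hidx : ∀ k, (idx k : ℕ) = m - 1 - d + (k : ℕ))
    -- degree-`d` assumptions
    (hdeg : ∀ t, Module.finrank ℝ (Submodule.span ℝ (Set.range fun j => ρ t j)) = d)
    (hind : ∀ t, LinearIndependent ℝ fun k => ρ t (idx k)) :
    ∃! s : Fin d → ℝ × (Fin (m - d - 1) → ℝ) → ℝ,
      (∀ h, ContDiff ℝ (⊤ : ℕ∞) (s h)) ∧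
      ∀ (h : Fin d) (t : ℝ) (u : Fin (m - d - 1) → ℝ),
        ⟪deriv (fun τ =>
            γ τ + (∑ j, u j • X (jdx j) τ) + ∑ i, s i (τ, u) • X (idx i) τ) t,
          ρ t (idx h)⟫ = 0 :=
  stmt_3_general m n d γ X hγ hX hON D hD ρ hρ jdx idx hind
end

section
/- Let V be a finite-dimensional real inner product space, let x_1, …, x_{m−1} ∈ V be an orthonormal family, and let π^⊥ denote the orthogonal projection of V onto span(x_1, …, x_{m−1})^⊥. Let y_{m−d}, …, y_{m−1} ∈ V be vectors such that π^⊥(y_{m−d}), …, π^⊥(y_{m−1}) are linearly independent, and let w ∈ V satisfy ⟨w, π^⊥(y_h)⟩ = 0 for every h ∈ {m−d, …, m−1}. Then for any real numbers c_{m−d}, …, c_{m−1}, the family (w + Σ_{h=m−d}^{m−1} c_h y_h, x_1, …, x_{m−1}) is linearly dependent if and only if c_h = 0 for all h and the family (w, x_1, …, x_{m−1}) is linearly dependent. -/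
open scoped RealInnerProductSpace

/-!
Since the `x_i` are independent, `(v, x₁, …, x_{m-1})` is dependent iff `v ∈ K := span(x_i)`,
i.e. iff `π⊥ v = 0`. Applying the linear map `π⊥` turns the claim into
`π⊥ w + Σ_h c_h π⊥ y_h = 0 ↔ (∀ h, c_h = 0) ∧ π⊥ w = 0`. As `π⊥` is a symmetric idempotent,
`⟪π⊥ w, π⊥ y_h⟫ = ⟪w, π⊥ y_h⟫ = 0`; pairing the equation with `π⊥ w` then kills `π⊥ w`, and
independence of the `π⊥ y_h` kills the `c_h`.
-/

theorem not_linearIndependent_vecCons_iff {K V : Type*} [DivisionRing K] [AddCommGroup V]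
    [Module K V] {n : ℕ} {x : Fin n → V} (hx : LinearIndependent K x) (v : V) :
    ¬ LinearIndependent K (Matrix.vecCons v x) ↔ v ∈ Submodule.span K (Set.range x) := by
  rw [Matrix.vecCons, linearIndependent_finCons]
  simp [hx]

theorem add_sum_smul_eq_zero_iff_of_inner_eq_zero {𝕜 E ι : Type*} [RCLike 𝕜]
    [NormedAddCommGroup E] [InnerProductSpace 𝕜 E] [Fintype ι] {z : ι → E}
    (hz : LinearIndependent 𝕜 z) {u : E} (hu : ∀ i, inner 𝕜 u (z i) = 0) (c : ι → 𝕜) :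
    u + ∑ i, c i • z i = 0 ↔ (∀ i, c i = 0) ∧ u = 0 := by
  refine ⟨fun h => ?_, fun ⟨hc, hu0⟩ => by simp [hc, hu0]⟩
  have hu0 : u = 0 := by
    have := congrArg (inner 𝕜 u) h
    simpa [inner_add_right, inner_sum, inner_smul_right, hu] using this
  rw [hu0, zero_add] at h
  exact ⟨Fintype.linearIndependent_iff.mp hz c h, hu0⟩

namespace Submodule

variable {𝕜 E : Type*} [RCLike 𝕜] [NormedAddCommGroup E] [InnerProductSpace 𝕜 E]
  (K : Submodule 𝕜 E) [K.HasOrthogonalProjection]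

theorem inner_starProjection_starProjection (u v : E) :
    inner 𝕜 (K.starProjection u) (K.starProjection v) = inner 𝕜 u (K.starProjection v) := by
  rw [inner_starProjection_left_eq_right,
    starProjection_eq_self_iff.mpr (starProjection_apply_mem K v)]

theorem starProjection_orthogonal_apply_eq_zero_iff {v : E} :
    Kᗮ.starProjection v = 0 ↔ v ∈ K := by
  rw [starProjection_apply_eq_zero_iff, orthogonal_orthogonal]

end Submodule

theorem stmt_4_general (m d : ℕ)
    (V : Type*) [NormedAddCommGroup V] [InnerProductSpace ℝ V] [FiniteDimensional ℝ V]
    (x : Fin (m - 1) → V) (hx : Orthonormal ℝ x)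
    (P : V → V)
    (hP : ∀ v, P v = ↑(Submodule.orthogonalProjectionOnto (Submodule.span ℝ (Set.range x))ᗮ v))
    (y : Fin d → V) (hy : LinearIndependent ℝ fun h => P (y h))
    (w : V) (hw : ∀ h, ⟪w, P (y h)⟫ = 0)
    (c : Fin d → ℝ) :
    ¬ LinearIndependent ℝ (Matrix.vecCons (w + ∑ h, c h • y h) x) ↔
      (∀ h, c h = 0) ∧ ¬ LinearIndependent ℝ (Matrix.vecCons w x) := by
  obtain rfl : P = (Submodule.span ℝ (Set.range x))ᗮ.starProjection := funext hP
  simp only [not_linearIndependent_vecCons_iff hx.linearIndependent,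
    ← Submodule.starProjection_orthogonal_apply_eq_zero_iff, map_add, map_sum, map_smul]
  exact add_sum_smul_eq_zero_iff_of_inner_eq_zero hy
    (fun h => (Submodule.inner_starProjection_starProjection _ w (y h)).trans (hw h)) c

/-- Let `V` be a finite-dimensional real inner product space,
`x₁, …, x_{m-1}` an orthonormal family, `π⊥` the orthogonal projection onto
`span(x₁, …, x_{m-1})ᗮ`, and `y_{m-d}, …, y_{m-1}` vectors with
`π⊥(y_{m-d}), …, π⊥(y_{m-1})` linearly independent. If `w` satisfies `⟨w, π⊥(y_h)⟩ = 0` for all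
`h`, then for any scalars `c_{m-d}, …, c_{m-1}` the family `(w + Σ_h c_h y_h, x₁, …, x_{m-1})`
is linearly dependent iff all `c_h = 0` and `(w, x₁, …, x_{m-1})` is linearly dependent. -/
theorem stmt_4 (m d : ℕ) (hm : 2 ≤ m) (hd1 : 1 ≤ d) (hd2 : d ≤ m - 1)
    (V : Type*) [NormedAddCommGroup V] [InnerProductSpace ℝ V] [FiniteDimensional ℝ V]
    (x : Fin (m - 1) → V) (hx : Orthonormal ℝ x)
    (P : V → V)
    (hP : ∀ v, P v = ↑(Submodule.orthogonalProjectionOnto (Submodule.span ℝ (Set.range x))ᗮ v))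
    (y : Fin d → V) (hy : LinearIndependent ℝ fun h => P (y h))
    (w : V) (hw : ∀ h, ⟪w, P (y h)⟫ = 0)
    (c : Fin d → ℝ) :
    ¬ LinearIndependent ℝ (Matrix.vecCons (w + ∑ h, c h • y h) x) ↔
      (∀ h, c h = 0) ∧ ¬ LinearIndependent ℝ (Matrix.vecCons w x) :=
  stmt_4_general m d V x hx P hP y hy w hw c
end

section
/- Define σ̃ : ℝ × ℝ^{m−1} → ℝ^N by σ̃(t, u^1, …, u^{m−1}) = β(t, u^1, …, u^{m−d−1}) + Σ_{h=m−d}^{m−1} u^h X_h(t). If the differential of σ̃ at a point (t, u^1, …, u^{m−1}) is not injective, then the span of the m partial derivatives of σ̃ at that point has dimension exactly m − 1. -/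
open scoped RealInnerProductSpace

/-!
The partial derivatives of `σ̃` at `(t, u)` are the images of the standard basis under its
differential `L`, so they span `range L`, which has dimension `< m` when `L` is not injective.
Conversely `∂σ̃/∂uʰ = X_h` for `h ≥ m - d`, because `s` does not depend on these coordinates,
and `∂σ̃/∂uʲ = X_j + Σ_h (∂s^h/∂uʲ) X_h` for `j < m - d`; hence `range L` contains the
`m - 1` orthonormal vectors `X_k(t)`.
-/

theorem LinearMap.finrank_range_lt_of_not_injective {K V W : Type*} [DivisionRing K]
    [AddCommGroup V] [Module K V] [AddCommGroup W] [Module K W] [FiniteDimensional K V]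
    {f : V →ₗ[K] W} (hf : ¬ Function.Injective f) :
    Module.finrank K (LinearMap.range f) < Module.finrank K V := by
  have hker : 0 < Module.finrank K (LinearMap.ker f) :=
    Nat.pos_of_ne_zero fun h => hf (LinearMap.ker_eq_bot.mp (Submodule.finrank_eq_zero.mp h))
  have := f.finrank_range_add_finrank_ker
  omega

theorem LinearMap.span_range_vecCons_single_eq_range {R M : Type*} [CommSemiring R]
    [AddCommMonoid M] [Module R M] {k : ℕ} (L : R × (Fin k → R) →ₗ[R] M) :
    Submodule.span R (Set.range (Matrix.vecCons (L (1, 0)) fun j => L (0, Pi.single j 1))) =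
      LinearMap.range L := by
  refine le_antisymm (Submodule.span_le.mpr ?_) ?_
  · rintro _ ⟨i, rfl⟩
    cases i using Fin.cases <;> simp
  · rintro _ ⟨y, rfl⟩
    have hy : y = y.1 • ((1 : R), (0 : Fin k → R)) + ∑ j, y.2 j • ((0 : R), Pi.single j 1) := by
      ext <;> simp [Prod.fst_sum, Prod.snd_sum, Pi.single_apply]
    rw [hy, map_add, map_sum, map_smul]
    refine add_mem (Submodule.smul_mem _ _ (Submodule.subset_span ⟨0, rfl⟩))
      (Submodule.sum_mem _ fun j _ => ?_)
    rw [map_smul]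
    exact Submodule.smul_mem _ _ (Submodule.subset_span ⟨j.succ, rfl⟩)

theorem deriv_comp_prodMk_left_eq_fderiv {𝕜 F E : Type*} [NontriviallyNormedField 𝕜]
    [NormedAddCommGroup F] [NormedSpace 𝕜 F] [NormedAddCommGroup E] [NormedSpace 𝕜 E]
    {f : 𝕜 × F → E} {t : 𝕜} {u : F} (hf : DifferentiableAt 𝕜 f (t, u)) :
    deriv (fun τ => f (τ, u)) t = fderiv 𝕜 f (t, u) (1, 0) :=
  (hf.hasFDerivAt.comp_hasDerivAt t ((hasDerivAt_id t).prodMk (hasDerivAt_const t u))).deriv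

theorem deriv_comp_prodMk_add_smul_eq_fderiv {𝕜 F E : Type*} [NontriviallyNormedField 𝕜]
    [NormedAddCommGroup F] [NormedSpace 𝕜 F] [NormedAddCommGroup E] [NormedSpace 𝕜 E]
    {f : 𝕜 × F → E} {t : 𝕜} {u : F} (hf : DifferentiableAt 𝕜 f (t, u)) (e : F) :
    deriv (fun r : 𝕜 => f (t, u + r • e)) 0 = fderiv 𝕜 f (t, u) (0, e) := by
  rw [← hf.lineDeriv_eq_fderiv, lineDeriv]
  simp

section
variable {E ι κ η : Type*} [NormedAddCommGroup E] [NormedSpace ℝ E] [Fintype κ] [Fintype η]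

/-- The map `σ̃` of the paper with `β` substituted. -/
def sigmaTilde (γ : ℝ → E) (X : ι → ℝ → E) (jdx : κ → ι) (idx : η → ι)
    (s : η → ℝ × (κ → ℝ) → ℝ) (p : ℝ × (ι → ℝ)) : E :=
  γ p.1 + ∑ j, p.2 (jdx j) • X (jdx j) p.1 +
    ∑ h, (s h (p.1, fun j => p.2 (jdx j)) + p.2 (idx h)) • X (idx h) p.1

variable {γ : ℝ → E} {X : ι → ℝ → E} {jdx : κ → ι} {idx : η → ι} {s : η → ℝ × (κ → ℝ) → ℝ}
  {t : ℝ} {u : ι → ℝ}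

theorem hasDerivAt_sigmaTilde_add_smul
    (hs : ∀ h, DifferentiableAt ℝ (s h) (t, fun j => u (jdx j))) (e : ι → ℝ) :
    HasDerivAt (fun r : ℝ => sigmaTilde γ X jdx idx s (t, u + r • e))
      (∑ j, e (jdx j) • X (jdx j) t +
        ∑ h, (fderiv ℝ (s h) (t, fun j => u (jdx j)) (0, fun j => e (jdx j)) + e (idx h)) •
          X (idx h) t) 0 := by
  have hcoord : ∀ i, HasDerivAt (fun r : ℝ => (u + r • e) i) (e i) 0 := fun i => by
    simpa using ((hasDerivAt_id (0 : ℝ)).mul_const (e i)).const_add (u i)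
  have hs' : ∀ h, HasDerivAt (fun r : ℝ => s h (t, fun j => (u + r • e) (jdx j)))
      (fderiv ℝ (s h) (t, fun j => u (jdx j)) (0, fun j => e (jdx j))) 0 := fun h => by
    have hout : HasFDerivAt (s h) (fderiv ℝ (s h) (t, fun j => u (jdx j)))
        (t, fun j => (u + (0 : ℝ) • e) (jdx j)) := by
      simpa using (hs h).hasFDerivAt
    exact hout.comp_hasDerivAt 0 <|
      (hasDerivAt_const (0 : ℝ) t).prodMk (hasDerivAt_pi.mpr fun j => hcoord (jdx j))
  simpa [sigmaTilde] using
    ((HasDerivAt.fun_sum fun j _ => (hcoord (jdx j)).smul_const (X (jdx j) t)).const_add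
      (γ t)).fun_add
      (HasDerivAt.fun_sum fun h _ =>
        ((hs' h).fun_add (hcoord (idx h))).smul_const (X (idx h) t))

variable [Fintype ι]

theorem differentiable_sigmaTilde (hγ : Differentiable ℝ γ)
    (hX : ∀ i, Differentiable ℝ (X i)) (hs : ∀ h, Differentiable ℝ (s h)) :
    Differentiable ℝ (sigmaTilde γ X jdx idx s) := by
  unfold sigmaTilde
  fun_prop

variable [DecidableEq ι]

theorem fderiv_sigmaTilde_single_idx (hdisj : ∀ j h, jdx j ≠ idx h)
    (hσ : DifferentiableAt ℝ (sigmaTilde γ X jdx idx s) (t, u))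
    (hs : ∀ h, DifferentiableAt ℝ (s h) (t, fun j => u (jdx j)))
    (hidx : Function.Injective idx) (h : η) :
    fderiv ℝ (sigmaTilde γ X jdx idx s) (t, u) (0, Pi.single (idx h) 1) = X (idx h) t := by
  rw [← deriv_comp_prodMk_add_smul_eq_fderiv hσ (Pi.single (idx h) 1),
    (hasDerivAt_sigmaTilde_add_smul hs _).deriv]
  have hzero : (fun j => (Pi.single (idx h) 1 : ι → ℝ) (jdx j)) = 0 :=
    funext fun j => Pi.single_eq_of_ne (hdisj j h) 1
  rw [hzero]
  classical
  simp [Pi.single_apply, hidx.eq_iff, hdisj, Prod.mk_zero_zero]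

theorem fderiv_sigmaTilde_single_jdx [DecidableEq κ] (hdisj : ∀ j h, jdx j ≠ idx h)
    (hσ : DifferentiableAt ℝ (sigmaTilde γ X jdx idx s) (t, u))
    (hs : ∀ h, DifferentiableAt ℝ (s h) (t, fun j => u (jdx j)))
    (hjdx : Function.Injective jdx) (j : κ) :
    fderiv ℝ (sigmaTilde γ X jdx idx s) (t, u) (0, Pi.single (jdx j) 1) =
      X (jdx j) t +
        ∑ h, fderiv ℝ (s h) (t, fun j => u (jdx j)) (0, Pi.single j 1) • X (idx h) t := by
  rw [← deriv_comp_prodMk_add_smul_eq_fderiv hσ (Pi.single (jdx j) 1),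
    (hasDerivAt_sigmaTilde_add_smul hs _).deriv]
  have hcomp : (fun j' => (Pi.single (jdx j) 1 : ι → ℝ) (jdx j')) = Pi.single j 1 := by
    ext j'
    simp [Pi.single_apply, hjdx.eq_iff]
  rw [hcomp]
  simp [Pi.single_apply, hjdx.eq_iff, fun h => (hdisj j h).symm]

theorem span_le_range_fderiv_sigmaTilde [DecidableEq κ] (hdisj : ∀ j h, jdx j ≠ idx h)
    (hσ : DifferentiableAt ℝ (sigmaTilde γ X jdx idx s) (t, u))
    (hs : ∀ h, DifferentiableAt ℝ (s h) (t, fun j => u (jdx j)))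
    (hjdx : Function.Injective jdx) (hidx : Function.Injective idx)
    (hcover : ∀ i, (∃ j, jdx j = i) ∨ ∃ h, idx h = i) :
    Submodule.span ℝ (Set.range fun i => X i t) ≤
      LinearMap.range (fderiv ℝ (sigmaTilde γ X jdx idx s) (t, u) : (ℝ × (ι → ℝ)) →ₗ[ℝ] E) := by
  have hX_idx : ∀ h, X (idx h) t ∈ LinearMap.range
      (fderiv ℝ (sigmaTilde γ X jdx idx s) (t, u) : (ℝ × (ι → ℝ)) →ₗ[ℝ] E) := fun h =>
    ⟨_, fderiv_sigmaTilde_single_idx hdisj hσ hs hidx h⟩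
  rw [Submodule.span_le, Set.range_subset_iff]
  intro i
  rcases hcover i with ⟨j, rfl⟩ | ⟨h, rfl⟩
  · rw [eq_sub_of_add_eq (fderiv_sigmaTilde_single_jdx hdisj hσ hs hjdx j).symm]
    exact sub_mem (LinearMap.mem_range_self _ _)
      (Submodule.sum_mem _ fun h _ => Submodule.smul_mem _ _ (hX_idx h))
  · exact hX_idx h
end

section
variable {N p d : ℕ} {jdx : Fin p → Fin N} {idx : Fin d → Fin N}

theorem Fin.injective_of_val_eq (hjdx : ∀ j, (jdx j : ℕ) = j) : Function.Injective jdx :=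
  fun a b hab => Fin.ext (by simpa [hjdx] using congrArg Fin.val hab)

theorem Fin.injective_of_val_eq_add (hidx : ∀ k, (idx k : ℕ) = p + k) :
    Function.Injective idx :=
  fun a b hab => Fin.ext (by simpa [hidx] using congrArg Fin.val hab)

theorem Fin.ne_of_val_eq_of_val_eq_add (hjdx : ∀ j, (jdx j : ℕ) = j)
    (hidx : ∀ k, (idx k : ℕ) = p + k) (j : Fin p) (k : Fin d) : jdx j ≠ idx k := fun h => by
  have := hjdx j
  have := hidx k
  have := congrArg Fin.val h
  omega

theorem Fin.exists_or_exists_of_val_eq (hN : N ≤ p + d) (hjdx : ∀ j, (jdx j : ℕ) = j)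
    (hidx : ∀ k, (idx k : ℕ) = p + k) (i : Fin N) : (∃ j, jdx j = i) ∨ ∃ k, idx k = i := by
  by_cases hi : (i : ℕ) < p
  · exact .inl ⟨⟨i, hi⟩, Fin.ext (hjdx _)⟩
  · exact .inr ⟨⟨i - p, by omega⟩, Fin.ext (by rw [hidx, Fin.val_mk]; omega)⟩
end

theorem stmt_7_general (m n d : ℕ)
    (γ : ℝ → EuclideanSpace ℝ (Fin (m + n)))
    (X : Fin (m - 1) → ℝ → EuclideanSpace ℝ (Fin (m + n)))
    (hγ : ContDiff ℝ (⊤ : ℕ∞) γ)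
    (hX : ∀ j, ContDiff ℝ (⊤ : ℕ∞) (X j))
    (hON : ∀ t, Orthonormal ℝ (fun j => X j t))
    -- index maps: `jdx` enumerates `{1, …, m-d-1}`, `idx` enumerates `{m-d, …, m-1}`
    (jdx : Fin (m - d - 1) → Fin (m - 1)) (hjdx : ∀ j, (jdx j : ℕ) = (j : ℕ))
    (idx : Fin d → Fin (m - 1)) (hidx : ∀ k, (idx k : ℕ) = m - 1 - d + (k : ℕ))
    -- the striction submanifold `β`, built from smooth functions `s^{m-d}, …, s^{m-1}`
    (s : Fin d → ℝ × (Fin (m - d - 1) → ℝ) → ℝ) (hs : ∀ h, ContDiff ℝ (⊤ : ℕ∞) (s h))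
    (β : ℝ → (Fin (m - d - 1) → ℝ) → EuclideanSpace ℝ (Fin (m + n)))
    (hβ : ∀ t u, β t u =
      γ t + (∑ j, u j • X (jdx j) t) + ∑ h, s h (t, u) • X (idx h) t)
    -- the reparametrization `σ̃` of the ruled submanifold in terms of `β`
    (σt : ℝ × (Fin (m - 1) → ℝ) → EuclideanSpace ℝ (Fin (m + n)))
    (hσt : ∀ (t : ℝ) (u : Fin (m - 1) → ℝ),
      σt (t, u) = β t (fun j => u (jdx j)) + ∑ h, u (idx h) • X (idx h) t)
    (t : ℝ) (u : Fin (m - 1) → ℝ)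
    (hsing : ¬ Function.Injective (fderiv ℝ σt (t, u)))
    -- the `m` partial derivatives of `σ̃` at `(t, u)`
    (Pt : EuclideanSpace ℝ (Fin (m + n))) (hPt : Pt = deriv (fun τ => σt (τ, u)) t)
    (Pu : Fin (m - 1) → EuclideanSpace ℝ (Fin (m + n)))
    (hPu : ∀ j, Pu j = deriv (fun r : ℝ => σt (t, u + r • (Pi.single j 1 : Fin (m - 1) → ℝ))) 0) :
    Module.finrank ℝ (Submodule.span ℝ (Set.range (Matrix.vecCons Pt Pu))) = m - 1 := by
  have hσ : σt = sigmaTilde γ X jdx idx s := funext fun ⟨τ, v⟩ => by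
    simp only [hσt, hβ, sigmaTilde, add_smul, Finset.sum_add_distrib, add_assoc]
  have hs' : ∀ h, Differentiable ℝ (s h) := fun h => (hs h).differentiable (by simp)
  have hdiff : Differentiable ℝ σt := hσ ▸ differentiable_sigmaTilde
    (hγ.differentiable (by simp)) (fun j => (hX j).differentiable (by simp)) hs'
  have hidx' : ∀ k, (idx k : ℕ) = m - d - 1 + k := fun k => by rw [hidx]; omega
  have hdisj := Fin.ne_of_val_eq_of_val_eq_add hjdx hidx'
  have hspan : Submodule.span ℝ (Set.range (Matrix.vecCons Pt Pu)) =
      LinearMap.range (fderiv ℝ σt (t, u) : (ℝ × (Fin (m - 1) → ℝ)) →ₗ[ℝ] _) := by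
    have hPu' : Pu = fun j => fderiv ℝ σt (t, u) (0, Pi.single j 1) :=
      funext fun j => by rw [hPu, deriv_comp_prodMk_add_smul_eq_fderiv (hdiff _)]
    rw [hPt, deriv_comp_prodMk_left_eq_fderiv (hdiff _), hPu']
    exact LinearMap.span_range_vecCons_single_eq_range _
  rw [hspan]
  apply le_antisymm
  · have := LinearMap.finrank_range_lt_of_not_injective hsing
    rw [Module.finrank_prod, Module.finrank_self, Module.finrank_fin_fun] at this
    omega
  · calc m - 1 = Module.finrank ℝ (Submodule.span ℝ (Set.range fun k => X k t)) := by
          rw [finrank_span_eq_card (hON t).linearIndependent, Fintype.card_fin]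
      _ ≤ _ := Submodule.finrank_mono <| hσ ▸ span_le_range_fderiv_sigmaTilde hdisj
          (hσ ▸ hdiff _) (fun h => hs' h _) (Fin.injective_of_val_eq hjdx)
          (Fin.injective_of_val_eq_add hidx')
          (Fin.exists_or_exists_of_val_eq (by omega) hjdx hidx')

/-- With `σ̃(t,u) = β(t, u¹, …, u^{m-d-1}) + Σ_h u^h X_h(t)`: if the
differential of `σ̃` at `(t,u)` is not injective, then the span of the `m` partial derivatives
of `σ̃` at that point has dimension exactly `m - 1`. -/
theorem stmt_7 (m n d : ℕ) (hm : 2 ≤ m) (hn : 1 ≤ n) (hd1 : 1 ≤ d) (hd2 : d ≤ m - 1)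
    (γ : ℝ → EuclideanSpace ℝ (Fin (m + n)))
    (X : Fin (m - 1) → ℝ → EuclideanSpace ℝ (Fin (m + n)))
    (hγ : ContDiff ℝ (⊤ : ℕ∞) γ) (hγ' : ∀ t, ‖deriv γ t‖ = 1)
    (hX : ∀ j, ContDiff ℝ (⊤ : ℕ∞) (X j))
    (hON : ∀ t, Orthonormal ℝ (fun j => X j t))
    (D : ℝ → Submodule ℝ (EuclideanSpace ℝ (Fin (m + n))))
    (hD : ∀ t, D t = Submodule.span ℝ (Set.range fun j => X j t))
    (ρ : ℝ → Fin (m - 1) → EuclideanSpace ℝ (Fin (m + n)))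
    (hρ : ∀ t j, ρ t j = ↑(Submodule.orthogonalProjectionOnto (D t)ᗮ (deriv (X j) t)))
    -- index maps: `jdx` enumerates `{1, …, m-d-1}`, `idx` enumerates `{m-d, …, m-1}`
    (jdx : Fin (m - d - 1) → Fin (m - 1)) (hjdx : ∀ j, (jdx j : ℕ) = (j : ℕ))
    (idx : Fin d → Fin (m - 1)) (hidx : ∀ k, (idx k : ℕ) = m - 1 - d + (k : ℕ))
    -- degree-`d` assumptions
    (hdeg : ∀ t, Module.finrank ℝ (Submodule.span ℝ (Set.range fun j => ρ t j)) = d)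
    (hind : ∀ t, LinearIndependent ℝ fun k => ρ t (idx k))
    -- the striction submanifold `β`, built from smooth functions `s^{m-d}, …, s^{m-1}`
    (s : Fin d → ℝ × (Fin (m - d - 1) → ℝ) → ℝ) (hs : ∀ h, ContDiff ℝ (⊤ : ℕ∞) (s h))
    (β : ℝ → (Fin (m - d - 1) → ℝ) → EuclideanSpace ℝ (Fin (m + n)))
    (hβ : ∀ t u, β t u =
      γ t + (∑ j, u j • X (jdx j) t) + ∑ h, s h (t, u) • X (idx h) t)
    (hstr : ∀ (h : Fin d) (t : ℝ) (u : Fin (m - d - 1) → ℝ),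
      ⟪deriv (fun τ => β τ u) t, ρ t (idx h)⟫ = 0)
    -- the reparametrization `σ̃` of the ruled submanifold in terms of `β`
    (σt : ℝ × (Fin (m - 1) → ℝ) → EuclideanSpace ℝ (Fin (m + n)))
    (hσt : ∀ (t : ℝ) (u : Fin (m - 1) → ℝ),
      σt (t, u) = β t (fun j => u (jdx j)) + ∑ h, u (idx h) • X (idx h) t)
    (t : ℝ) (u : Fin (m - 1) → ℝ)
    (hsing : ¬ Function.Injective (fderiv ℝ σt (t, u)))
    -- the `m` partial derivatives of `σ̃` at `(t, u)`
    (Pt : EuclideanSpace ℝ (Fin (m + n))) (hPt : Pt = deriv (fun τ => σt (τ, u)) t)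
    (Pu : Fin (m - 1) → EuclideanSpace ℝ (Fin (m + n)))
    (hPu : ∀ j, Pu j = deriv (fun r : ℝ => σt (t, u + r • (Pi.single j 1 : Fin (m - 1) → ℝ))) 0) :
    Module.finrank ℝ (Submodule.span ℝ (Set.range (Matrix.vecCons Pt Pu))) = m - 1 :=
  stmt_7_general m n d γ X hγ hX hON jdx hjdx idx hidx s hs β hβ σt hσt t u hsing Pt hPt Pu hPu
end

section
/- For every (t, u) ∈ ℝ × ℝ^{m−d−1}, the span of the m − d partial derivatives of β at (t, u) (namely ∂β/∂t and ∂β/∂u^j for j = 1, …, m−d−1) has dimension at least m − d − 1; that is, the differential of the striction submanifold β has rank at least m − d − 1 everywhere. -/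
/-!
The partial derivative `∂β/∂u^j` is `X_j` plus a combination of `X_{m-d}, …, X_{m-1}`, so its
inner products with `X_1, …, X_{m-d-1}` form the identity matrix. Hence these `m - d - 1`
partials are linearly independent.
-/

open scoped InnerProductSpace

theorem linearIndependent_of_inner_eq_ite {𝕜 E ι : Type*} [RCLike 𝕜] [NormedAddCommGroup E]
    [InnerProductSpace 𝕜 E] [DecidableEq ι] {v w : ι → E}
    (h : ∀ i j, ⟪w i, v j⟫_𝕜 = if i = j then 1 else 0) : LinearIndependent 𝕜 v := by
  rw [linearIndependent_iff']
  intro s g hg i hi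
  have := congrArg (inner 𝕜 (w i)) hg
  simpa [inner_sum, inner_smul_right, h, hi] using this

theorem Orthonormal.inner_add_sum_smul_eq_ite {𝕜 E ι κ : Type*} [RCLike 𝕜] [NormedAddCommGroup E]
    [InnerProductSpace 𝕜 E] [DecidableEq ι] [Fintype κ] {X : ι → E} (hX : Orthonormal 𝕜 X)
    {idx : κ → ι} {i : ι} (hi : i ∉ Set.range idx) (k : ι) (c : κ → 𝕜) :
    ⟪X i, X k + ∑ h, c h • X (idx h)⟫_𝕜 = if i = k then 1 else 0 := by
  have hzero : ∀ h, ⟪X i, X (idx h)⟫_𝕜 = 0 := fun h =>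
    hX.inner_eq_zero fun hih => hi ⟨h, hih.symm⟩
  simp [inner_add_right, inner_sum, inner_smul_right, hzero, orthonormal_iff_ite.mp hX]

theorem LinearIndependent.le_finrank_span_range_vecCons {K V : Type*} [DivisionRing K]
    [AddCommGroup V] [Module K V] {n : ℕ} {v : Fin n → V} (hv : LinearIndependent K v) (a : V) :
    n ≤ Module.finrank K (Submodule.span K (Set.range (Matrix.vecCons a v))) := by
  calc n = Module.finrank K (Submodule.span K (Set.range v)) := by
        rw [finrank_span_eq_card hv, Fintype.card_fin]
    _ ≤ _ :=
      have := FiniteDimensional.span_of_finite K (Set.finite_range (Matrix.vecCons a v))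
      Submodule.finrank_mono (Submodule.span_mono (by simp [Matrix.range_cons]))

theorem lineDeriv_add_sum_smul_add_sum_smul {E ι κ : Type*} [NormedAddCommGroup E]
    [NormedSpace ℝ E] [Fintype ι] [Fintype κ] (a : E) (Y : ι → E) (Z : κ → E)
    {σ : κ → (ι → ℝ) → ℝ} {u : ι → ℝ} (hσ : ∀ h, DifferentiableAt ℝ (σ h) u) (v : ι → ℝ) :
    lineDeriv ℝ (fun u => a + ∑ i, u i • Y i + ∑ h, σ h u • Z h) u v =
      ∑ i, v i • Y i + ∑ h, fderiv ℝ (σ h) u v • Z h := by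
  have hF : HasFDerivAt (fun u => a + ∑ i, u i • Y i + ∑ h, σ h u • Z h)
      (∑ i, (ContinuousLinearMap.proj i).smulRight (Y i) +
        ∑ h, (fderiv ℝ (σ h) u).smulRight (Z h)) u :=
    ((HasFDerivAt.fun_sum (u := Finset.univ) fun i _ =>
      (hasFDerivAt_apply i u).smul_const (Y i)).const_add a).fun_add
      (HasFDerivAt.fun_sum fun h _ => (hσ h).hasFDerivAt.smul_const (Z h))
  rw [(hF.hasLineDerivAt v).lineDeriv]
  simp

theorem stmt_8_general (m n d : ℕ)
    (γ : ℝ → EuclideanSpace ℝ (Fin (m + n)))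
    (X : Fin (m - 1) → ℝ → EuclideanSpace ℝ (Fin (m + n)))
    (hON : ∀ t, Orthonormal ℝ (fun j => X j t))
    -- index maps: `jdx` enumerates `{1, …, m-d-1}`, `idx` enumerates `{m-d, …, m-1}`
    (jdx : Fin (m - d - 1) → Fin (m - 1)) (hjdx : ∀ j, (jdx j : ℕ) = (j : ℕ))
    (idx : Fin d → Fin (m - 1)) (hidx : ∀ k, (idx k : ℕ) = m - 1 - d + (k : ℕ))
    -- the striction submanifold `β`, built from smooth functions `s^{m-d}, …, s^{m-1}`
    (s : Fin d → ℝ × (Fin (m - d - 1) → ℝ) → ℝ) (hs : ∀ h, ContDiff ℝ (⊤ : ℕ∞) (s h))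
    (β : ℝ → (Fin (m - d - 1) → ℝ) → EuclideanSpace ℝ (Fin (m + n)))
    (hβ : ∀ t u, β t u =
      γ t + (∑ j, u j • X (jdx j) t) + ∑ h, s h (t, u) • X (idx h) t) :
    ∀ (t : ℝ) (u : Fin (m - d - 1) → ℝ),
      m - d - 1 ≤ Module.finrank ℝ (Submodule.span ℝ (Set.range
        (Matrix.vecCons (deriv (fun τ => β τ u) t)
          (fun j => deriv (fun r : ℝ =>
            β t (u + r • (Pi.single j 1 : Fin (m - d - 1) → ℝ))) 0)))) := by
  intro t u
  have hjdx_inj : Function.Injective jdx := fun a b hab => Fin.ext <| by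
    simpa [hjdx] using congrArg Fin.val hab
  have hjdx_notMem : ∀ j, jdx j ∉ Set.range idx := by
    rintro j ⟨h, hh⟩
    have := congrArg Fin.val hh
    rw [hjdx, hidx] at this
    omega
  have hpartial : ∀ j, lineDeriv ℝ (β t) u (Pi.single j 1) =
      X (jdx j) t + ∑ h, fderiv ℝ (fun w => s h (t, w)) u (Pi.single j 1) • X (idx h) t := by
    intro j
    rw [show β t = _ from funext (hβ t), lineDeriv_add_sum_smul_add_sum_smul]
    · simp
    · intro h
      exact ((hs h).differentiable (by simp)).differentiableAt.comp u (by fun_prop)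
  refine LinearIndependent.le_finrank_span_range_vecCons
    (v := fun j => lineDeriv ℝ (β t) u (Pi.single j 1)) ?_ _
  refine linearIndependent_of_inner_eq_ite (w := fun j => X (jdx j) t) fun i j => ?_
  rw [hpartial, (hON t).inner_add_sum_smul_eq_ite (hjdx_notMem i)]
  simp only [hjdx_inj.eq_iff]

/-- For every `(t,u)`, the span of the `m - d` partial derivatives of the
striction submanifold `β` at `(t,u)` has dimension at least `m - d - 1`; i.e. the differential
of `β` has rank at least `m - d - 1` everywhere. -/
theorem stmt_8 (m n d : ℕ) (hm : 2 ≤ m) (hn : 1 ≤ n) (hd1 : 1 ≤ d) (hd2 : d ≤ m - 1)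
    (γ : ℝ → EuclideanSpace ℝ (Fin (m + n)))
    (X : Fin (m - 1) → ℝ → EuclideanSpace ℝ (Fin (m + n)))
    (hγ : ContDiff ℝ (⊤ : ℕ∞) γ) (hγ' : ∀ t, ‖deriv γ t‖ = 1)
    (hX : ∀ j, ContDiff ℝ (⊤ : ℕ∞) (X j))
    (hON : ∀ t, Orthonormal ℝ (fun j => X j t))
    -- index maps: `jdx` enumerates `{1, …, m-d-1}`, `idx` enumerates `{m-d, …, m-1}`
    (jdx : Fin (m - d - 1) → Fin (m - 1)) (hjdx : ∀ j, (jdx j : ℕ) = (j : ℕ))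
    (idx : Fin d → Fin (m - 1)) (hidx : ∀ k, (idx k : ℕ) = m - 1 - d + (k : ℕ))
    -- the striction submanifold `β`, built from smooth functions `s^{m-d}, …, s^{m-1}`
    (s : Fin d → ℝ × (Fin (m - d - 1) → ℝ) → ℝ) (hs : ∀ h, ContDiff ℝ (⊤ : ℕ∞) (s h))
    (β : ℝ → (Fin (m - d - 1) → ℝ) → EuclideanSpace ℝ (Fin (m + n)))
    (hβ : ∀ t u, β t u =
      γ t + (∑ j, u j • X (jdx j) t) + ∑ h, s h (t, u) • X (idx h) t) :
    ∀ (t : ℝ) (u : Fin (m - d - 1) → ℝ),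
      m - d - 1 ≤ Module.finrank ℝ (Submodule.span ℝ (Set.range
        (Matrix.vecCons (deriv (fun τ => β τ u) t)
          (fun j => deriv (fun r : ℝ =>
            β t (u + r • (Pi.single j 1 : Fin (m - d - 1) → ℝ))) 0)))) :=
  stmt_8_general m n d γ X hON jdx hjdx idx hidx s hs β hβ
end

section
/- Fix (t, u) ∈ ℝ × ℝ^{m−1} and suppose the m partial derivatives of σ at (t, u) are linearly independent (i.e., (t,u) is a regular point). Let T ⊆ ℝ^N be the span of these partial derivatives and let π_N denote the orthogonal projection of ℝ^N onto T^⊥. Let N¹ be the span of π_N(∂²σ/∂t²(t,u)) together with π_N(∂²σ/∂t∂u^j(t,u)) for j = 1, …, m−1 (this is the first normal space of σ at the point, since all second partial derivatives of σ in ruling directions vanish). If dim span(ρ_t X_1, …, ρ_t X_{m−1}) = d, then d − 1 ≤ dim N¹ ≤ d + 1. -/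
open Module Submodule

/-!
Along a ruling `σ` is affine with velocity `X j`, so the tangent space is `T = ℝ ∙ σ_t ⊔ D t`
and the mixed derivatives are `Ẋ j`. As `D t ≤ T`, the normal projection `π_N` kills the
`D t`-component of `Ẋ j`, so `π_N (σ_{t u^j}) = π_N (ρ_t X_j)`, and these span the image under
`π_N` of `R = span (ρ_t X_j)`, of dimension `d`. The kernel `T` of `π_N` meets `R ≤ (D t)ᗮ` in
at most a line, since `T ⊓ (D t)ᗮ` is spanned by the projection of `σ_t` onto `(D t)ᗮ`; so the
image has dimension `d - 1` or `d`, and adjoining `π_N (σ_tt)` adds at most one more.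
-/

theorem Finset.sum_add_smul_single_smul {ι R M : Type*} [Fintype ι] [DecidableEq ι] [Semiring R]
    [AddCommMonoid M] [Module R M] (u : ι → R) (r : R) (j : ι) (x : ι → M) :
    ∑ k, (u + r • (Pi.single j 1 : ι → R)) k • x k = ∑ k, u k • x k + r • x j := by
  simp [add_smul, Finset.sum_add_distrib, Pi.single_apply]

theorem deriv_const_add_sum_add_smul_single_smul {ι F : Type*} [Fintype ι] [DecidableEq ι]
    [NormedAddCommGroup F] [NormedSpace ℝ F] (p : F) (u : ι → ℝ) (j : ι) (x : ι → F) (r : ℝ) :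
    deriv (fun r : ℝ => p + ∑ k, (u + r • (Pi.single j 1 : ι → ℝ)) k • x k) r = x j := by
  simp_rw [Finset.sum_add_smul_single_smul, ← add_assoc]
  simpa using (((hasDerivAt_id r).smul_const (x j)).const_add (p + ∑ k, u k • x k)).deriv

namespace Submodule

section DivisionRing

variable {K V : Type*} [DivisionRing K] [AddCommGroup V] [Module K V]

theorem finrank_span_singleton_le_one (a : V) : finrank K (K ∙ a) ≤ 1 := by
  simpa using finrank_span_le_card (R := K) ({a} : Set V)

theorem finrank_span_singleton_sup_le (a : V) (S : Submodule K V) [FiniteDimensional K S] :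
    finrank K ↥(K ∙ a ⊔ S) ≤ finrank K S + 1 :=
  (finrank_add_le_finrank_add_finrank _ S).trans
    (by have := finrank_span_singleton_le_one (K := K) a; omega)

theorem finrank_le_finrank_map_add_finrank_inf_ker {W : Type*} [AddCommGroup W] [Module K W]
    (f : V →ₗ[K] W) (R : Submodule K V) [FiniteDimensional K R] :
    finrank K R ≤ finrank K (R.map f) + finrank K ↥(R ⊓ LinearMap.ker f) := by
  have h := LinearMap.finrank_range_add_finrank_ker (f.domRestrict R)
  rw [LinearMap.range_domRestrict, LinearMap.ker_domRestrict] at h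
  rw [← h, ← finrank_map_subtype_eq, map_comap_subtype]

end DivisionRing

theorem finrank_inf_orthogonal_le_one {𝕜 E : Type*} [RCLike 𝕜] [NormedAddCommGroup E]
    [InnerProductSpace 𝕜 E] {K T : Submodule 𝕜 E} [Kᗮ.HasOrthogonalProjection] {p : E}
    (hT : T ≤ 𝕜 ∙ p ⊔ K) : finrank 𝕜 ↥(T ⊓ Kᗮ) ≤ 1 := by
  have hle : T ⊓ Kᗮ ≤ 𝕜 ∙ Kᗮ.starProjection p := by
    rintro x ⟨hxT, hxK⟩
    obtain ⟨y, hy, z, hz, rfl⟩ := mem_sup.mp (hT hxT)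
    obtain ⟨c, rfl⟩ := mem_span_singleton.mp hy
    rw [← starProjection_eq_self_iff.mpr hxK, map_add, starProjection_orthogonal_apply_eq_zero hz,
      add_zero, map_smul]
    exact smul_mem _ c (mem_span_singleton_self _)
  exact (finrank_mono hle).trans (finrank_span_singleton_le_one _)

end Submodule

theorem stmt_9_general (m n d : ℕ)
    (γ : ℝ → EuclideanSpace ℝ (Fin (m + n)))
    (X : Fin (m - 1) → ℝ → EuclideanSpace ℝ (Fin (m + n)))
    (D : ℝ → Submodule ℝ (EuclideanSpace ℝ (Fin (m + n))))
    (hD : ∀ t, D t = Submodule.span ℝ (Set.range fun j => X j t))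
    (ρ : ℝ → Fin (m - 1) → EuclideanSpace ℝ (Fin (m + n)))
    (hρ : ∀ t j, ρ t j = ↑(Submodule.orthogonalProjectionOnto (D t)ᗮ (deriv (X j) t)))
    -- the ruled submanifold `σ`
    (σ : ℝ → (Fin (m - 1) → ℝ) → EuclideanSpace ℝ (Fin (m + n)))
    (hσ : ∀ t u, σ t u = γ t + ∑ j, u j • X j t)
    (t : ℝ) (u : Fin (m - 1) → ℝ)
    -- the `m` first-order partial derivatives of `σ` at `(t, u)`
    (Pt : EuclideanSpace ℝ (Fin (m + n)))
    (Pu : Fin (m - 1) → EuclideanSpace ℝ (Fin (m + n)))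
    (hPu : ∀ j, Pu j = deriv (fun r : ℝ =>
      σ t (u + r • (Pi.single j 1 : Fin (m - 1) → ℝ))) 0)
    -- the tangent space `T` and the normal projection `π_N`
    (T : Submodule ℝ (EuclideanSpace ℝ (Fin (m + n))))
    (hT : T = Submodule.span ℝ (Set.range (Matrix.vecCons Pt Pu)))
    (πN : EuclideanSpace ℝ (Fin (m + n)) → EuclideanSpace ℝ (Fin (m + n)))
    (hπN : ∀ v, πN v = ↑(Submodule.orthogonalProjectionOnto Tᗮ v))
    -- the second-order partial derivatives `∂²σ/∂t²` and `∂²σ/∂t∂uʲ` at `(t, u)`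
    (Ptt : EuclideanSpace ℝ (Fin (m + n)))
    (Ptu : Fin (m - 1) → EuclideanSpace ℝ (Fin (m + n)))
    (hPtu : ∀ j, Ptu j = deriv (fun τ => deriv (fun r : ℝ =>
      σ τ (u + r • (Pi.single j 1 : Fin (m - 1) → ℝ))) 0) t)
    -- the first normal space `N1`
    (N1 : Submodule ℝ (EuclideanSpace ℝ (Fin (m + n))))
    (hN1 : N1 = Submodule.span ℝ (Set.range (Matrix.vecCons (πN Ptt) (fun j => πN (Ptu j)))))
    (hdeg : Module.finrank ℝ (Submodule.span ℝ (Set.range fun j => ρ t j)) = d) :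
    d - 1 ≤ Module.finrank ℝ N1 ∧ Module.finrank ℝ N1 ≤ d + 1 := by
  obtain rfl : σ = fun t u => γ t + ∑ j, u j • X j t := funext₂ hσ
  set R := span ℝ (Set.range (ρ t))
  set L := Tᗮ.starProjection.toLinearMap
  have hPu' : Pu = fun j => X j t := funext fun j => by
    rw [hPu, deriv_const_add_sum_add_smul_single_smul]
  have hTD : T = ℝ ∙ Pt ⊔ D t := by
    rw [hT, hD, Matrix.range_cons, span_union, hPu']
  have hRD : R ≤ (D t)ᗮ := by
    rw [span_le]
    rintro _ ⟨j, rfl⟩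
    rw [hρ]
    exact coe_mem _
  have hπNPtu : (fun j => πN (Ptu j)) = fun j => L (ρ t j) := funext fun j => by
    simp only [hPtu, deriv_const_add_sum_add_smul_single_smul, hπN, hρ]
    exact congrArg Subtype.val (orthogonalProjectionOnto_starProjection_of_le
      (orthogonal_le (hTD ▸ le_sup_right)) _).symm
  have hN1' : N1 = ℝ ∙ πN Ptt ⊔ R.map L := by
    rw [hN1, Matrix.range_cons, span_union, hπNPtu, map_span, ← Set.range_comp]
    rfl
  have hLT : LinearMap.ker L = T := by
    rw [← orthogonal_orthogonal T, ← Tᗮ.ker_starProjection]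
  have hker : finrank ℝ ↥(R ⊓ LinearMap.ker L) ≤ 1 := by
    rw [hLT, inf_comm]
    exact (finrank_mono (inf_le_inf_left T hRD)).trans (finrank_inf_orthogonal_le_one hTD.le)
  have hlow := finrank_le_finrank_map_add_finrank_inf_ker L R
  have hmono := finrank_mono (le_sup_right : R.map L ≤ ℝ ∙ πN Ptt ⊔ R.map L)
  have hmap := finrank_map_le L R
  have hup := finrank_span_singleton_sup_le (πN Ptt) (R.map L)
  rw [hN1']
  omega

/-- At a regular point `(t,u)` of the ruled submanifold `σ`, let `T` be the
tangent space (span of the `m` partial derivatives), `π_N` the orthogonal projection onto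
`Tᗮ`, and `N1` the first normal space, spanned by `π_N(∂²σ/∂t²)` and the `π_N(∂²σ/∂t∂uʲ)`.
If `dim span(ρ_t X₁, …, ρ_t X_{m-1}) = d`, then `d - 1 ≤ dim N1 ≤ d + 1`. -/
theorem stmt_9 (m n d : ℕ) (hm : 2 ≤ m) (hn : 1 ≤ n) (hd : d ≤ m - 1)
    (γ : ℝ → EuclideanSpace ℝ (Fin (m + n)))
    (X : Fin (m - 1) → ℝ → EuclideanSpace ℝ (Fin (m + n)))
    (hγ : ContDiff ℝ (⊤ : ℕ∞) γ) (hγ' : ∀ t, ‖deriv γ t‖ = 1)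
    (hX : ∀ j, ContDiff ℝ (⊤ : ℕ∞) (X j))
    (hON : ∀ t, Orthonormal ℝ (fun j => X j t))
    (D : ℝ → Submodule ℝ (EuclideanSpace ℝ (Fin (m + n))))
    (hD : ∀ t, D t = Submodule.span ℝ (Set.range fun j => X j t))
    (ρ : ℝ → Fin (m - 1) → EuclideanSpace ℝ (Fin (m + n)))
    (hρ : ∀ t j, ρ t j = ↑(Submodule.orthogonalProjectionOnto (D t)ᗮ (deriv (X j) t)))
    -- the ruled submanifold `σ`
    (σ : ℝ → (Fin (m - 1) → ℝ) → EuclideanSpace ℝ (Fin (m + n)))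
    (hσ : ∀ t u, σ t u = γ t + ∑ j, u j • X j t)
    (t : ℝ) (u : Fin (m - 1) → ℝ)
    -- the `m` first-order partial derivatives of `σ` at `(t, u)`
    (Pt : EuclideanSpace ℝ (Fin (m + n))) (hPt : Pt = deriv (fun τ => σ τ u) t)
    (Pu : Fin (m - 1) → EuclideanSpace ℝ (Fin (m + n)))
    (hPu : ∀ j, Pu j = deriv (fun r : ℝ =>
      σ t (u + r • (Pi.single j 1 : Fin (m - 1) → ℝ))) 0)
    -- `(t, u)` is a regular point
    (hreg : LinearIndependent ℝ (Matrix.vecCons Pt Pu))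
    -- the tangent space `T` and the normal projection `π_N`
    (T : Submodule ℝ (EuclideanSpace ℝ (Fin (m + n))))
    (hT : T = Submodule.span ℝ (Set.range (Matrix.vecCons Pt Pu)))
    (πN : EuclideanSpace ℝ (Fin (m + n)) → EuclideanSpace ℝ (Fin (m + n)))
    (hπN : ∀ v, πN v = ↑(Submodule.orthogonalProjectionOnto Tᗮ v))
    -- the second-order partial derivatives `∂²σ/∂t²` and `∂²σ/∂t∂uʲ` at `(t, u)`
    (Ptt : EuclideanSpace ℝ (Fin (m + n)))
    (hPtt : Ptt = deriv (fun τ => deriv (fun τ' => σ τ' u) τ) t)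
    (Ptu : Fin (m - 1) → EuclideanSpace ℝ (Fin (m + n)))
    (hPtu : ∀ j, Ptu j = deriv (fun τ => deriv (fun r : ℝ =>
      σ τ (u + r • (Pi.single j 1 : Fin (m - 1) → ℝ))) 0) t)
    -- the first normal space `N1`
    (N1 : Submodule ℝ (EuclideanSpace ℝ (Fin (m + n))))
    (hN1 : N1 = Submodule.span ℝ (Set.range (Matrix.vecCons (πN Ptt) (fun j => πN (Ptu j)))))
    (hdeg : Module.finrank ℝ (Submodule.span ℝ (Set.range fun j => ρ t j)) = d) :
    d - 1 ≤ Module.finrank ℝ N1 ∧ Module.finrank ℝ N1 ≤ d + 1 :=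
  stmt_9_general m n d γ X D hD ρ hρ σ hσ t u Pt Pu hPu T hT πN hπN Ptt Ptu hPtu N1 hN1 hdeg
end

section
/- Suppose that for every t the vectors γ̇(t), X_1(t), …, X_{m−1}(t) are linearly independent, and that for every j ∈ {1, …, m−1} and every t the family (Ẋ_j(t), γ̇(t), X_1(t), …, X_{m−1}(t)) is linearly dependent (the rank-one condition of Lemma 4.4). Then dim span(ρ_t X_1, …, ρ_t X_{m−1}) ≤ 1 for every t. In other words, a noncylindrical rank-one submanifold is necessarily of degree one. -/
/-! By the rank-one condition Ẋⱼ(t) lies in span(γ̇(t)) + D_t. Projecting onto D_t^⊥ kills D_t,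
so every ρ_t X_j lies on the line spanned by the projection of γ̇(t). -/

open Submodule Module

theorem mem_span_range_of_not_linearIndependent_finCons {K V : Type*} [DivisionRing K]
    [AddCommGroup V] [Module K V] {n : ℕ} {x : V} {v : Fin n → V}
    (hv : LinearIndependent K v) (hxv : ¬ LinearIndependent K (Fin.cons x v : Fin (n + 1) → V)) :
    x ∈ span K (Set.range v) :=
  by_contra fun hx => hxv (linearIndependent_finCons.2 ⟨hv, hx⟩)

theorem finrank_le_one_of_le_span_singleton {K V : Type*} [DivisionRing K] [AddCommGroup V]
    [Module K V] {W : Submodule K V} {w : V} (hW : W ≤ K ∙ w) : finrank K W ≤ 1 :=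
  (Submodule.finrank_mono hW).trans (by simpa using finrank_span_le_card ({w} : Set V))

theorem orthogonalProjectionOnto_orthogonal_mem_span_singleton {𝕜 E : Type*} [RCLike 𝕜]
    [NormedAddCommGroup E] [InnerProductSpace 𝕜 E] {K : Submodule 𝕜 E}
    [Kᗮ.HasOrthogonalProjection] {x y : E} (hx : x ∈ (𝕜 ∙ y) ⊔ K) :
    (Kᗮ.orthogonalProjectionOnto x : E) ∈ 𝕜 ∙ (Kᗮ.orthogonalProjectionOnto y : E) := by
  obtain ⟨_, hy, z, hz, rfl⟩ := mem_sup.1 hx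
  obtain ⟨a, rfl⟩ := mem_span_singleton.1 hy
  rw [map_add, orthogonalProjectionOnto_orthogonal_apply_eq_zero hz, add_zero, map_smul]
  exact smul_mem _ _ (mem_span_singleton_self _)

theorem stmt_10_general (m n : ℕ)
    (γ : ℝ → EuclideanSpace ℝ (Fin (m + n)))
    (X : Fin (m - 1) → ℝ → EuclideanSpace ℝ (Fin (m + n)))
    (D : ℝ → Submodule ℝ (EuclideanSpace ℝ (Fin (m + n))))
    (hD : ∀ t, D t = Submodule.span ℝ (Set.range fun j => X j t))
    (ρ : ℝ → Fin (m - 1) → EuclideanSpace ℝ (Fin (m + n)))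
    (hρ : ∀ t j, ρ t j = ↑(Submodule.orthogonalProjection (D t)ᗮ (deriv (X j) t)))
    (hreg : ∀ t, LinearIndependent ℝ (Matrix.vecCons (deriv γ t) (fun j => X j t)))
    (hrank1 : ∀ (j : Fin (m - 1)) (t : ℝ),
      ¬ LinearIndependent ℝ
        (Matrix.vecCons (deriv (X j) t) (Matrix.vecCons (deriv γ t) (fun i => X i t)))) :
    ∀ t, Module.finrank ℝ (Submodule.span ℝ (Set.range fun j => ρ t j)) ≤ 1 := by
  intro t
  have hXdot : ∀ j, deriv (X j) t ∈ (ℝ ∙ deriv γ t) ⊔ D t := fun j => by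
    have h := mem_span_range_of_not_linearIndependent_finCons (hreg t) (hrank1 j t)
    rwa [Matrix.range_cons, Set.singleton_union, span_insert, ← hD] at h
  refine finrank_le_one_of_le_span_singleton (w := ((D t)ᗮ.orthogonalProjectionOnto (deriv γ t) : _))
    (span_le.2 (Set.range_subset_iff.2 fun j => ?_))
  rw [SetLike.mem_coe, hρ]
  exact orthogonalProjectionOnto_orthogonal_mem_span_singleton (hXdot j)

/-- If for every `t` the vectors `γ̇(t), X₁(t), …, X_{m-1}(t)` are linearly
independent and for every `j` the family `(Ẋⱼ(t), γ̇(t), X₁(t), …, X_{m-1}(t))` is linearly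
dependent (the rank-one condition), then `dim span(ρ_t X₁, …, ρ_t X_{m-1}) ≤ 1` for every `t`:
a noncylindrical rank-one submanifold is necessarily of degree one. -/
theorem stmt_10 (m n : ℕ) (hm : 2 ≤ m) (hn : 1 ≤ n)
    (γ : ℝ → EuclideanSpace ℝ (Fin (m + n)))
    (X : Fin (m - 1) → ℝ → EuclideanSpace ℝ (Fin (m + n)))
    (hγ : ContDiff ℝ (⊤ : ℕ∞) γ) (hγ' : ∀ t, ‖deriv γ t‖ = 1)
    (hX : ∀ j, ContDiff ℝ (⊤ : ℕ∞) (X j))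
    (hON : ∀ t, Orthonormal ℝ (fun j => X j t))
    (D : ℝ → Submodule ℝ (EuclideanSpace ℝ (Fin (m + n))))
    (hD : ∀ t, D t = Submodule.span ℝ (Set.range fun j => X j t))
    (ρ : ℝ → Fin (m - 1) → EuclideanSpace ℝ (Fin (m + n)))
    (hρ : ∀ t j, ρ t j = ↑(Submodule.orthogonalProjection (D t)ᗮ (deriv (X j) t)))
    (hreg : ∀ t, LinearIndependent ℝ (Matrix.vecCons (deriv γ t) (fun j => X j t)))
    (hrank1 : ∀ (j : Fin (m - 1)) (t : ℝ),
      ¬ LinearIndependent ℝ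
        (Matrix.vecCons (deriv (X j) t) (Matrix.vecCons (deriv γ t) (fun i => X i t)))) :
    ∀ t, Module.finrank ℝ (Submodule.span ℝ (Set.range fun j => ρ t j)) ≤ 1 :=
  stmt_10_general m n γ X D hD ρ hρ hreg hrank1
end

section
/- Assume additionally that for every j ∈ {1, …, m−1} and every t the family (Ẋ_j(t), γ̇(t), X_1(t), …, X_{m−1}(t)) is linearly dependent (σ is rank-one). Then for every (t, u^1, …, u^{m−2}) ∈ ℝ × ℝ^{m−2}, the vectors (∂β/∂t)(t, u^1, …, u^{m−2}), X_1(t), …, X_{m−1}(t) are linearly dependent; that is, every point of the striction hypersurface β is a singular point of the ruled submanifold σ. -/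
open scoped RealInnerProductSpace

/-!
Let `P` be the orthogonal projection onto `D_tᗮ`. It kills every `X_j(t)` and sends `Ẋ_j(t)` to
`ρ_t X_j`, which by degree one lies on the line `ℝ ρ_t X_{m-1}`; rank-one for `j = m - 1` puts
`P γ̇(t)` on that line as well. Hence `P (∂β/∂t)` lies on the line spanned by `ρ_t X_{m-1} ∈ D_tᗮ`,
while the striction condition makes it orthogonal to `ρ_t X_{m-1}`. So `P (∂β/∂t) = 0`, that is,
`∂β/∂t ∈ D_t`.
-/

open Submodule

theorem Submodule.span_range_eq_span_singleton_of_finrank_eq_one {K V ι : Type*} [Field K]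
    [AddCommGroup V] [Module K V] {v : ι → V} (hv : Module.finrank K (span K (Set.range v)) = 1)
    {i : ι} (hi : v i ≠ 0) : span K (Set.range v) = K ∙ v i :=
  have : FiniteDimensional K (span K (Set.range v)) := Module.finite_of_finrank_eq_succ hv
  (eq_of_le_of_finrank_le (span_mono (by simp)) (by rw [hv, finrank_span_singleton hi])).symm

theorem LinearMap.map_mem_span_singleton_of_not_linearIndependent_cons_cons {K V W : Type*}
    [Field K] [AddCommGroup V] [Module K V] [AddCommGroup W] [Module K W] (f : V →ₗ[K] W)
    {k : ℕ} {x : Fin k → V} (hx : LinearIndependent K x) (hfx : ∀ i, f (x i) = 0) {a b : V}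
    (ha : f a ≠ 0) (hab : ¬ LinearIndependent K (Fin.cons a (Fin.cons b x : Fin (k + 1) → V))) :
    f b ∈ K ∙ f a := by
  have hspan : span K (Set.range x) ≤ LinearMap.ker f :=
    span_le.2 (by rintro _ ⟨i, rfl⟩; exact hfx i)
  by_cases hb : b ∈ span K (Set.range x)
  · rw [hspan hb]
    exact zero_mem _
  have hbx : LinearIndependent K (Fin.cons b x : Fin (k + 1) → V) :=
    linearIndependent_finCons.2 ⟨hx, hb⟩
  have ha_mem : a ∈ span K (insert b (Set.range x)) := by
    rw [← Fin.range_cons]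
    by_contra h
    exact hab (linearIndependent_finCons.2 ⟨hbx, h⟩)
  obtain ⟨c, z, hz, rfl⟩ := mem_span_insert.1 ha_mem
  rw [map_add, map_smul, hspan hz, add_zero] at ha ⊢
  have hc : c ≠ 0 := by rintro rfl; simp at ha
  rw [mem_span_singleton]
  exact ⟨c⁻¹, inv_smul_smul₀ hc _⟩

theorem Submodule.mem_orthogonal_of_starProjection_mem_span_singleton {𝕜 E : Type*} [RCLike 𝕜]
    [NormedAddCommGroup E] [InnerProductSpace 𝕜 E] (K : Submodule 𝕜 E) [K.HasOrthogonalProjection]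
    {r w : E} (hr : r ∈ K) (hw : K.starProjection w ∈ 𝕜 ∙ r) (hwr : inner 𝕜 w r = 0) :
    w ∈ Kᗮ := by
  obtain ⟨c, hc⟩ := mem_span_singleton.1 hw
  have hPw_r : inner 𝕜 (K.starProjection w) r = 0 := by
    rw [inner_starProjection_left_eq_right, starProjection_eq_self_iff.2 hr, hwr]
  rw [← starProjection_apply_eq_zero_iff, ← inner_self_eq_zero (𝕜 := 𝕜)]
  calc inner 𝕜 (K.starProjection w) (K.starProjection w)
      = inner 𝕜 (K.starProjection w) (c • r) := by rw [hc]
    _ = 0 := by rw [inner_smul_right, hPw_r, mul_zero]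

theorem Submodule.mem_of_inner_starProjection_orthogonal_eq_zero {E : Type*}
    [NormedAddCommGroup E] [InnerProductSpace ℝ E] (K : Submodule ℝ E) [K.HasOrthogonalProjection]
    {k : ℕ} {x dx : Fin k → E} {g : E} {i : Fin k} (hx : LinearIndependent ℝ x)
    (hxK : ∀ j, x j ∈ K)
    (hdeg : Module.finrank ℝ (span ℝ (Set.range fun j => Kᗮ.starProjection (dx j))) = 1)
    (hi : Kᗮ.starProjection (dx i) ≠ 0)
    (hrank : ¬ LinearIndependent ℝ (Fin.cons (dx i) (Fin.cons g x : Fin (k + 1) → E)))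
    {v : E} (hv : v ∈ span ℝ (insert g (Set.range dx ∪ Set.range x)))
    (hvr : ⟪v, Kᗮ.starProjection (dx i)⟫ = 0) :
    v ∈ K := by
  set P := Kᗮ.starProjection
  have hPx : ∀ j, P (x j) = 0 := fun j => by
    rw [starProjection_apply_eq_zero_iff, orthogonal_orthogonal]
    exact hxK j
  have hspan : span ℝ (insert g (Set.range dx ∪ Set.range x)) ≤
      (ℝ ∙ P (dx i)).comap P.toLinearMap := by
    simp only [span_le, Set.insert_subset_iff, Set.union_subset_iff, Set.range_subset_iff]
    refine ⟨P.toLinearMap.map_mem_span_singleton_of_not_linearIndependent_cons_cons hx hPx hi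
      hrank, fun j => ?_, fun j => by simp [hPx]⟩
    rw [SetLike.mem_coe, mem_comap, ← span_range_eq_span_singleton_of_finrank_eq_one hdeg hi]
    exact subset_span ⟨j, rfl⟩
  simpa [orthogonal_orthogonal] using Kᗮ.mem_orthogonal_of_starProjection_mem_span_singleton
    (Kᗮ.starProjection_apply_mem _) (hspan hv) hvr

theorem deriv_add_sum_smul_add_smul {ι E : Type*} [Fintype ι] [NormedAddCommGroup E]
    [NormedSpace ℝ E] {γ Z : ℝ → E} {Y : ι → ℝ → E} {c : ℝ → ℝ} (u : ι → ℝ) {t : ℝ}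
    (hγ : DifferentiableAt ℝ γ t) (hY : ∀ i, DifferentiableAt ℝ (Y i) t)
    (hc : DifferentiableAt ℝ c t) (hZ : DifferentiableAt ℝ Z t) :
    deriv (fun τ => γ τ + ∑ i, u i • Y i τ + c τ • Z τ) t =
      deriv γ t + ∑ i, u i • deriv (Y i) t + (c t • deriv Z t + deriv c t • Z t) :=
  ((hγ.hasDerivAt.add (HasDerivAt.fun_sum fun i _ => (hY i).hasDerivAt.const_smul (u i))).add
    (hc.hasDerivAt.fun_smul hZ.hasDerivAt)).deriv

theorem stmt_11_general (m n : ℕ)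
    (γ : ℝ → EuclideanSpace ℝ (Fin (m + n)))
    (X : Fin (m - 1) → ℝ → EuclideanSpace ℝ (Fin (m + n)))
    (hγ : ContDiff ℝ (⊤ : ℕ∞) γ)
    (hX : ∀ j, ContDiff ℝ (⊤ : ℕ∞) (X j))
    (hON : ∀ t, Orthonormal ℝ (fun j => X j t))
    (D : ℝ → Submodule ℝ (EuclideanSpace ℝ (Fin (m + n))))
    (hD : ∀ t, D t = Submodule.span ℝ (Set.range fun j => X j t))
    (ρ : ℝ → Fin (m - 1) → EuclideanSpace ℝ (Fin (m + n)))
    (hρ : ∀ t j, ρ t j = ↑((D t)ᗮ.orthogonalProjectionOnto (deriv (X j) t)))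
    -- index maps: `jdx` enumerates `{1, …, m-2}`, `last` is the index of `X_{m-1}`
    (jdx : Fin (m - 2) → Fin (m - 1))
    (last : Fin (m - 1))
    -- `σ` has degree one
    (hdeg : ∀ t, Module.finrank ℝ (Submodule.span ℝ (Set.range fun j => ρ t j)) = 1)
    (hne : ∀ t, ρ t last ≠ 0)
    -- the striction hypersurface `β`, built from a smooth function `s^{m-1}`
    (s : ℝ × (Fin (m - 2) → ℝ) → ℝ) (hs : ContDiff ℝ (⊤ : ℕ∞) s)
    (β : ℝ → (Fin (m - 2) → ℝ) → EuclideanSpace ℝ (Fin (m + n)))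
    (hβ : ∀ t u, β t u = γ t + (∑ j, u j • X (jdx j) t) + s (t, u) • X last t)
    (hstr : ∀ (t : ℝ) (u : Fin (m - 2) → ℝ),
      ⟪deriv (fun τ => β τ u) t, ρ t last⟫ = 0)
    -- `σ` is rank-one
    (hrank1 : ∀ (j : Fin (m - 1)) (t : ℝ),
      ¬ LinearIndependent ℝ
        (Matrix.vecCons (deriv (X j) t) (Matrix.vecCons (deriv γ t) (fun i => X i t)))) :
    ∀ (t : ℝ) (u : Fin (m - 2) → ℝ),
      ¬ LinearIndependent ℝ
        (Matrix.vecCons (deriv (fun τ => β τ u) t) (fun i => X i t)) := by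
  intro t u
  have hρt : ρ t = fun j => (D t)ᗮ.starProjection (deriv (X j) t) := by
    funext j
    rw [hρ, starProjection_apply]
  have hβ' : deriv (fun τ => β τ u) t = deriv γ t + ∑ j, u j • deriv (X (jdx j)) t +
      (s (t, u) • deriv (X last) t + deriv (fun τ => s (τ, u)) t • X last t) := by
    simp only [hβ]
    exact deriv_add_sum_smul_add_smul u (hγ.differentiable (by simp) t)
      (fun j => (hX _).differentiable (by simp) t)
      ((hs.comp (contDiff_id.prodMk contDiff_const)).differentiable (by simp) t)
      ((hX last).differentiable (by simp) t)
  set S : Set (EuclideanSpace ℝ (Fin (m + n))) :=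
    insert (deriv γ t) (Set.range (fun j => deriv (X j) t) ∪ Set.range (fun j => X j t))
  have hβ'_mem : deriv (fun τ => β τ u) t ∈ span ℝ S := by
    have hdXS : ∀ j, deriv (X j) t ∈ span ℝ S := fun j => subset_span (Or.inr (Or.inl ⟨j, rfl⟩))
    have hXS : ∀ j, X j t ∈ span ℝ S := fun j => subset_span (Or.inr (Or.inr ⟨j, rfl⟩))
    rw [hβ']
    exact add_mem (add_mem (subset_span (Set.mem_insert _ _)) (sum_mem fun j _ => smul_mem _ _
      (hdXS _))) (add_mem (smul_mem _ _ (hdXS _)) (smul_mem _ _ (hXS _)))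
  have hρ_last := congrFun hρt last
  have hβ'_D : deriv (fun τ => β τ u) t ∈ D t :=
    (D t).mem_of_inner_starProjection_orthogonal_eq_zero (dx := fun j => deriv (X j) t)
      (g := deriv γ t) (hON t).linearIndependent (fun j => hD t ▸ subset_span ⟨j, rfl⟩)
      (hρt ▸ hdeg t) (hρ_last ▸ hne t) (hrank1 last t) hβ'_mem (hρ_last ▸ hstr t u)
  rw [hD] at hβ'_D
  exact fun h => (linearIndependent_finCons.1 h).2 hβ'_D

/-- If `σ` has degree one and is rank-one (for every `j` and `t` the family
`(Ẋⱼ(t), γ̇(t), X₁(t), …, X_{m-1}(t))` is linearly dependent), then for every `(t,u)` the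
vectors `∂β/∂t, X₁(t), …, X_{m-1}(t)` are linearly dependent: every point of the striction
hypersurface `β` is a singular point of `σ`. -/
theorem stmt_11 (m n : ℕ) (hm : 2 ≤ m) (hn : 1 ≤ n)
    (γ : ℝ → EuclideanSpace ℝ (Fin (m + n)))
    (X : Fin (m - 1) → ℝ → EuclideanSpace ℝ (Fin (m + n)))
    (hγ : ContDiff ℝ (⊤ : ℕ∞) γ) (hγ' : ∀ t, ‖deriv γ t‖ = 1)
    (hX : ∀ j, ContDiff ℝ (⊤ : ℕ∞) (X j))
    (hON : ∀ t, Orthonormal ℝ (fun j => X j t))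
    (D : ℝ → Submodule ℝ (EuclideanSpace ℝ (Fin (m + n))))
    (hD : ∀ t, D t = Submodule.span ℝ (Set.range fun j => X j t))
    (ρ : ℝ → Fin (m - 1) → EuclideanSpace ℝ (Fin (m + n)))
    (hρ : ∀ t j, ρ t j = ↑((D t)ᗮ.orthogonalProjectionOnto (deriv (X j) t)))
    -- index maps: `jdx` enumerates `{1, …, m-2}`, `last` is the index of `X_{m-1}`
    (jdx : Fin (m - 2) → Fin (m - 1)) (hjdx : ∀ j, (jdx j : ℕ) = (j : ℕ))
    (last : Fin (m - 1)) (hlast : (last : ℕ) = m - 2)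
    -- `σ` has degree one
    (hdeg : ∀ t, Module.finrank ℝ (Submodule.span ℝ (Set.range fun j => ρ t j)) = 1)
    (hne : ∀ t, ρ t last ≠ 0)
    -- the striction hypersurface `β`, built from a smooth function `s^{m-1}`
    (s : ℝ × (Fin (m - 2) → ℝ) → ℝ) (hs : ContDiff ℝ (⊤ : ℕ∞) s)
    (β : ℝ → (Fin (m - 2) → ℝ) → EuclideanSpace ℝ (Fin (m + n)))
    (hβ : ∀ t u, β t u = γ t + (∑ j, u j • X (jdx j) t) + s (t, u) • X last t)
    (hstr : ∀ (t : ℝ) (u : Fin (m - 2) → ℝ),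
      ⟪deriv (fun τ => β τ u) t, ρ t last⟫ = 0)
    -- `σ` is rank-one
    (hrank1 : ∀ (j : Fin (m - 1)) (t : ℝ),
      ¬ LinearIndependent ℝ
        (Matrix.vecCons (deriv (X j) t) (Matrix.vecCons (deriv γ t) (fun i => X i t)))) :
    ∀ (t : ℝ) (u : Fin (m - 2) → ℝ),
      ¬ LinearIndependent ℝ
        (Matrix.vecCons (deriv (fun τ => β τ u) t) (fun i => X i t)) :=
  stmt_11_general m n γ X hγ hX hON D hD ρ hρ jdx last hdeg hne s hs β hβ hstr hrank1
end

section
/- Assume there exists (u^1, …, u^{m−2}) ∈ ℝ^{m−2} such that for every t the vectors (∂β/∂t)(t, u^1, …, u^{m−2}), X_1(t), …, X_{m−1}(t) are linearly dependent (σ is singular along the striction hypersurface). Then for every j ∈ {1, …, m−1} and every t the family (Ẋ_j(t), γ̇(t), X_1(t), …, X_{m−1}(t)) is linearly dependent; that is, σ is rank-one. -/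
/-!
Let `W = span (X₁(t), …, X_{m-1}(t)) ⊔ ℝ ρ_t X_{m-1}`, of dimension at most `m`. Each `Ẋⱼ(t)` is
its component in `D_t` plus `ρ_t Xⱼ`, and degree one puts `ρ_t Xⱼ` on the line `ℝ ρ_t X_{m-1}`, so
`Ẋⱼ(t) ∈ W`. Singularity along the striction hypersurface puts `∂β/∂t` in `D_t ⊆ W`, and
`∂β/∂t = γ̇ + ∑ uʲ Ẋⱼ + s Ẋ_{m-1} + (∂s/∂t) X_{m-1}` then forces `γ̇(t) ∈ W`. So the `m + 1`
vectors `Ẋⱼ(t), γ̇(t), X₁(t), …, X_{m-1}(t)` all lie in `W` and are dependent.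
-/

open scoped RealInnerProductSpace

open Module Submodule

theorem Submodule.mem_span_singleton_of_finrank_span_range_eq_one {K V ι : Type*} [DivisionRing K]
    [AddCommGroup V] [Module K V] {f : ι → V} (hf : finrank K (span K (Set.range f)) = 1)
    {i₀ : ι} (hi₀ : f i₀ ≠ 0) (i : ι) : f i ∈ K ∙ f i₀ := by
  have : FiniteDimensional K (span K (Set.range f)) := .of_finrank_eq_succ hf
  have hspan : (K ∙ f i₀) = span K (Set.range f) :=
    eq_of_le_of_finrank_le (span_mono (Set.singleton_subset_iff.2 ⟨i₀, rfl⟩))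
      (by rw [hf, finrank_span_singleton hi₀])
  exact hspan ▸ subset_span ⟨i, rfl⟩

theorem not_linearIndependent_of_forall_mem_of_finrank_lt {K V ι : Type*} [DivisionRing K]
    [AddCommGroup V] [Module K V] [Fintype ι] {f : ι → V} {W : Submodule K V}
    [FiniteDimensional K W] (hfW : ∀ i, f i ∈ W) (hW : finrank K W < Fintype.card ι) :
    ¬ LinearIndependent K f := fun hf => by
  have := finrank_span_eq_card hf ▸ finrank_mono (span_le.2 (Set.range_subset_iff.2 hfW))
  omega

theorem Submodule.mem_sup_of_orthogonalProjectionOnto_mem {𝕜 E : Type*} [RCLike 𝕜]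
    [NormedAddCommGroup E] [InnerProductSpace 𝕜 E] (K : Submodule 𝕜 E) [K.HasOrthogonalProjection]
    {L : Submodule 𝕜 E} {v : E} (hv : (Kᗮ.orthogonalProjectionOnto v : E) ∈ L) : v ∈ K ⊔ L := by
  rw [← K.starProjection_add_starProjection_orthogonal v]
  exact add_mem (mem_sup_left (K.starProjection_apply v ▸ coe_mem _))
    (mem_sup_right (Kᗮ.starProjection_apply v ▸ hv))

theorem deriv_add_sum_smul_add_smul_mem_iff {E ι : Type*} [NormedAddCommGroup E]
    [NormedSpace ℝ E] [Fintype ι] {γ Z : ℝ → E} {Y : ι → ℝ → E} {a : ι → ℝ} {c : ℝ → ℝ} {t : ℝ}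
    {W : Submodule ℝ E} (hγ : DifferentiableAt ℝ γ t) (hY : ∀ i, DifferentiableAt ℝ (Y i) t)
    (hZ : DifferentiableAt ℝ Z t) (hc : DifferentiableAt ℝ c t) (hdYW : ∀ i, deriv (Y i) t ∈ W)
    (hZW : Z t ∈ W) (hdZW : deriv Z t ∈ W) :
    deriv (fun τ => γ τ + ∑ i, a i • Y i τ + c τ • Z τ) t ∈ W ↔ deriv γ t ∈ W := by
  have hsum : HasDerivAt (fun τ => ∑ i, a i • Y i τ) (∑ i, a i • deriv (Y i) t) t :=
    HasDerivAt.fun_sum fun i _ => (hY i).hasDerivAt.const_smul (a i)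
  have hZc := hc.hasDerivAt.fun_smul hZ.hasDerivAt
  rw [((hγ.hasDerivAt.fun_add hsum).fun_add hZc).deriv, add_assoc]
  exact W.add_mem_iff_left (add_mem (sum_mem fun i _ => W.smul_mem _ (hdYW i))
    (add_mem (W.smul_mem _ hdZW) (W.smul_mem _ hZW)))

theorem stmt_12_general (m n : ℕ)
    (γ : ℝ → EuclideanSpace ℝ (Fin (m + n)))
    (X : Fin (m - 1) → ℝ → EuclideanSpace ℝ (Fin (m + n)))
    (hγ : ContDiff ℝ (⊤ : ℕ∞) γ)
    (hX : ∀ j, ContDiff ℝ (⊤ : ℕ∞) (X j))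
    (hON : ∀ t, Orthonormal ℝ (fun j => X j t))
    (D : ℝ → Submodule ℝ (EuclideanSpace ℝ (Fin (m + n))))
    (hD : ∀ t, D t = Submodule.span ℝ (Set.range fun j => X j t))
    (ρ : ℝ → Fin (m - 1) → EuclideanSpace ℝ (Fin (m + n)))
    (hρ : ∀ t j, ρ t j = ↑(Submodule.orthogonalProjectionOnto (D t)ᗮ (deriv (X j) t)))
    -- index maps: `jdx` enumerates `{1, …, m-2}`, `last` is the index of `X_{m-1}`
    (jdx : Fin (m - 2) → Fin (m - 1))
    (last : Fin (m - 1))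
    -- `σ` has degree one
    (hdeg : ∀ t, Module.finrank ℝ (Submodule.span ℝ (Set.range fun j => ρ t j)) = 1)
    (hne : ∀ t, ρ t last ≠ 0)
    -- the striction hypersurface `β`, built from a smooth function `s^{m-1}`
    (s : ℝ × (Fin (m - 2) → ℝ) → ℝ) (hs : ContDiff ℝ (⊤ : ℕ∞) s)
    (β : ℝ → (Fin (m - 2) → ℝ) → EuclideanSpace ℝ (Fin (m + n)))
    (hβ : ∀ t u, β t u = γ t + (∑ j, u j • X (jdx j) t) + s (t, u) • X last t)
    -- `σ` is singular along the striction hypersurface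
    (hsing : ∃ u : Fin (m - 2) → ℝ, ∀ t : ℝ,
      ¬ LinearIndependent ℝ
        (Matrix.vecCons (deriv (fun τ => β τ u) t) (fun i => X i t))) :
    ∀ (j : Fin (m - 1)) (t : ℝ),
      ¬ LinearIndependent ℝ
        (Matrix.vecCons (deriv (X j) t) (Matrix.vecCons (deriv γ t) (fun i => X i t))) := by
  intro j t
  obtain ⟨u, hu⟩ := hsing
  set W := span ℝ (Set.range fun i => X i t) ⊔ (ℝ ∙ ρ t last)
  have hXW (i : Fin (m - 1)) : X i t ∈ W := mem_sup_left (subset_span ⟨i, rfl⟩)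
  have hdXW (i : Fin (m - 1)) : deriv (X i) t ∈ W := by
    have := (D t).mem_sup_of_orthogonalProjectionOnto_mem
      (hρ t i ▸ mem_span_singleton_of_finrank_span_range_eq_one (hdeg t) (hne t) i)
    rwa [hD t] at this
  have hβW : deriv (fun τ => β τ u) t ∈ W := mem_sup_left <| by
    by_contra h
    exact hu t (linearIndependent_finCons.2 ⟨(hON t).linearIndependent, h⟩)
  have hXt (i : Fin (m - 1)) : DifferentiableAt ℝ (X i) t := (hX i).differentiable (by simp) t
  have hst : DifferentiableAt ℝ (fun τ => s (τ, u)) t :=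
    (hs.comp (contDiff_id.prodMk contDiff_const)).differentiable (by simp) t
  have hγW : deriv γ t ∈ W :=
    (deriv_add_sum_smul_add_smul_mem_iff (a := u) (hγ.differentiable (by simp) t)
      (fun k => hXt (jdx k)) (hXt last) hst (fun k => hdXW (jdx k)) (hXW last) (hdXW last)).1
      (by simpa only [hβ] using hβW)
  refine not_linearIndependent_of_forall_mem_of_finrank_lt
    (Fin.cases (hdXW j) (Fin.cases hγW hXW)) ?_
  calc finrank ℝ W
      ≤ finrank ℝ (span ℝ (Set.range fun i => X i t)) + finrank ℝ (ℝ ∙ ρ t last) :=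
        finrank_add_le_finrank_add_finrank _ _
    _ ≤ (m - 1) + 1 :=
        add_le_add ((finrank_range_le_card _).trans_eq (Fintype.card_fin _))
          (finrank_span_singleton (hne t)).le
    _ < Fintype.card (Fin (m - 1 + 1 + 1)) := by simp

/-- If `σ` has degree one and there exists `u ∈ ℝ^{m-2}` such that for every
`t` the vectors `∂β/∂t, X₁(t), …, X_{m-1}(t)` are linearly dependent (`σ` is singular along
the striction hypersurface), then for every `j` and `t` the family
`(Ẋⱼ(t), γ̇(t), X₁(t), …, X_{m-1}(t))` is linearly dependent: `σ` is rank-one. -/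
theorem stmt_12 (m n : ℕ) (hm : 2 ≤ m) (hn : 1 ≤ n)
    (γ : ℝ → EuclideanSpace ℝ (Fin (m + n)))
    (X : Fin (m - 1) → ℝ → EuclideanSpace ℝ (Fin (m + n)))
    (hγ : ContDiff ℝ (⊤ : ℕ∞) γ) (hγ' : ∀ t, ‖deriv γ t‖ = 1)
    (hX : ∀ j, ContDiff ℝ (⊤ : ℕ∞) (X j))
    (hON : ∀ t, Orthonormal ℝ (fun j => X j t))
    (D : ℝ → Submodule ℝ (EuclideanSpace ℝ (Fin (m + n))))
    (hD : ∀ t, D t = Submodule.span ℝ (Set.range fun j => X j t))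
    (ρ : ℝ → Fin (m - 1) → EuclideanSpace ℝ (Fin (m + n)))
    (hρ : ∀ t j, ρ t j = ↑(Submodule.orthogonalProjectionOnto (D t)ᗮ (deriv (X j) t)))
    -- index maps: `jdx` enumerates `{1, …, m-2}`, `last` is the index of `X_{m-1}`
    (jdx : Fin (m - 2) → Fin (m - 1)) (hjdx : ∀ j, (jdx j : ℕ) = (j : ℕ))
    (last : Fin (m - 1)) (hlast : (last : ℕ) = m - 2)
    -- `σ` has degree one
    (hdeg : ∀ t, Module.finrank ℝ (Submodule.span ℝ (Set.range fun j => ρ t j)) = 1)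
    (hne : ∀ t, ρ t last ≠ 0)
    -- the striction hypersurface `β`, built from a smooth function `s^{m-1}`
    (s : ℝ × (Fin (m - 2) → ℝ) → ℝ) (hs : ContDiff ℝ (⊤ : ℕ∞) s)
    (β : ℝ → (Fin (m - 2) → ℝ) → EuclideanSpace ℝ (Fin (m + n)))
    (hβ : ∀ t u, β t u = γ t + (∑ j, u j • X (jdx j) t) + s (t, u) • X last t)
    (hstr : ∀ (t : ℝ) (u : Fin (m - 2) → ℝ),
      ⟪deriv (fun τ => β τ u) t, ρ t last⟫ = 0)
    -- `σ` is singular along the striction hypersurface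
    (hsing : ∃ u : Fin (m - 2) → ℝ, ∀ t : ℝ,
      ¬ LinearIndependent ℝ
        (Matrix.vecCons (deriv (fun τ => β τ u) t) (fun i => X i t))) :
    ∀ (j : Fin (m - 1)) (t : ℝ),
      ¬ LinearIndependent ℝ
        (Matrix.vecCons (deriv (X j) t) (Matrix.vecCons (deriv γ t) (fun i => X i t))) :=
  stmt_12_general m n γ X hγ hX hON D hD ρ hρ jdx last hdeg hne s hs β hβ hsing
end

section
/- Fix (t, u) ∈ ℝ × ℝ^{m−2}. Suppose that the vectors (∂β/∂t)(t, u), X_1(t), …, X_{m−1}(t) are linearly dependent, and that the m−1 partial derivatives of β at (t, u) (namely ∂β/∂t and ∂β/∂u^j for j = 1, …, m−2) are linearly independent. Then X_{m−1}(t) belongs to the span of the partial derivatives of β at (t, u). (Hence, when its striction hypersurface is regular, a noncylindrical rank-one submanifold is a tangent submanifold of its striction hypersurface.) -/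
/- Both `∂β/∂t` (by the dependence hypothesis) and every `∂β/∂u^j` (since `u ↦ β(t, u)` stays in
the affine space `γ(t) + span X(t)`) lie in `span X(t)`. So the `m - 1` independent partial
derivatives span a subspace of `span X(t)`, which has dimension `m - 1`; hence the two spans agree
and contain `X_{m-1}(t)`. -/

open Set Submodule

theorem deriv_mem_of_forall_sub_mem {𝕜 F : Type*} [NontriviallyNormedField 𝕜]
    [NormedAddCommGroup F] [NormedSpace 𝕜 F] {V : Submodule 𝕜 F} (hV : IsClosed (V : Set F))
    {f : 𝕜 → F} {p : F} (hf : ∀ r, f r - p ∈ V) (x : 𝕜) : deriv f x ∈ V := by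
  have h := range_deriv_subset_closure_span_image (fun r => f r - p) dense_univ ⟨x, rfl⟩
  rw [deriv_sub_const] at h
  refine hV.closure_subset_iff.2 ?_ h
  exact span_le.2 (image_subset_iff.2 fun r _ => hf r)

theorem span_range_eq_of_range_subset {K V ι κ : Type*} [DivisionRing K] [AddCommGroup V]
    [Module K V] [Fintype ι] [Fintype κ] {b : ι → V} {v : κ → V} (hb : LinearIndependent K b)
    (hcard : Fintype.card κ = Fintype.card ι) (hsub : range b ⊆ span K (range v)) :
    span K (range b) = span K (range v) :=
  have := FiniteDimensional.span_of_finite K (finite_range v)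
  eq_of_le_of_finrank_le (span_le.2 hsub) <| by
    rw [finrank_span_eq_card hb, ← hcard]
    exact finrank_range_le_card v

theorem stmt_14_general (m n : ℕ)
    (γ : ℝ → EuclideanSpace ℝ (Fin (m + n)))
    (X : Fin (m - 1) → ℝ → EuclideanSpace ℝ (Fin (m + n)))
    (hON : ∀ t, Orthonormal ℝ (fun j => X j t))
    -- index maps: `jdx` enumerates `{1, …, m-2}`, `last` is the index of `X_{m-1}`
    (jdx : Fin (m - 2) → Fin (m - 1))
    (last : Fin (m - 1))
    -- the striction hypersurface `β`, built from a smooth function `s^{m-1}`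
    (s : ℝ × (Fin (m - 2) → ℝ) → ℝ)
    (β : ℝ → (Fin (m - 2) → ℝ) → EuclideanSpace ℝ (Fin (m + n)))
    (hβ : ∀ t u, β t u = γ t + (∑ j, u j • X (jdx j) t) + s (t, u) • X last t)
    (t : ℝ) (u : Fin (m - 2) → ℝ)
    -- the `m-1` partial derivatives of `β` at `(t, u)`
    (B : Fin (m - 2 + 1) → EuclideanSpace ℝ (Fin (m + n)))
    (hB : B = Matrix.vecCons (deriv (fun τ => β τ u) t)
      (fun j => deriv (fun r : ℝ => β t (u + r • (Pi.single j 1 : Fin (m - 2) → ℝ))) 0))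
    (hdep : ¬ LinearIndependent ℝ
      (Matrix.vecCons (deriv (fun τ => β τ u) t) (fun i => X i t)))
    (hreg : LinearIndependent ℝ B) :
    X last t ∈ Submodule.span ℝ (Set.range B) := by
  set V := span ℝ (range fun i => X i t)
  have hβ_mem : ∀ v, β t v - γ t ∈ V := fun v => by
    rw [hβ, add_assoc, add_sub_cancel_left]
    exact add_mem (sum_mem fun j _ => smul_mem _ _ (subset_span ⟨jdx j, rfl⟩))
      (smul_mem _ _ (subset_span ⟨last, rfl⟩))
  have hβt : deriv (fun τ => β τ u) t ∈ V := by
    by_contra h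
    exact hdep (linearIndependent_finCons.2 ⟨(hON t).linearIndependent, h⟩)
  have hsub : range B ⊆ V := by
    rintro _ ⟨k, rfl⟩
    rw [hB]
    refine Fin.cases hβt (fun j => ?_) k
    exact deriv_mem_of_forall_sub_mem V.closed_of_finiteDimensional (fun r => hβ_mem _) 0
  have hcard : Fintype.card (Fin (m - 1)) = Fintype.card (Fin (m - 2 + 1)) := by
    have := last.is_lt
    simp only [Fintype.card_fin]
    omega
  rw [span_range_eq_of_range_subset hreg hcard hsub]
  exact subset_span ⟨last, rfl⟩

/-- Fix `(t,u) ∈ ℝ × ℝ^{m-2}`. If the vectors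
`∂β/∂t, X₁(t), …, X_{m-1}(t)` are linearly dependent while the `m-1` partial derivatives of
`β` at `(t,u)` are linearly independent, then `X_{m-1}(t)` lies in the span of the partial
derivatives of `β` at `(t,u)`. (Hence, when its striction hypersurface is regular, a
noncylindrical rank-one submanifold is a tangent submanifold of it.) -/
theorem stmt_14 (m n : ℕ) (hm : 2 ≤ m) (hn : 1 ≤ n)
    (γ : ℝ → EuclideanSpace ℝ (Fin (m + n)))
    (X : Fin (m - 1) → ℝ → EuclideanSpace ℝ (Fin (m + n)))
    (hγ : ContDiff ℝ (⊤ : ℕ∞) γ) (hγ' : ∀ t, ‖deriv γ t‖ = 1)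
    (hX : ∀ j, ContDiff ℝ (⊤ : ℕ∞) (X j))
    (hON : ∀ t, Orthonormal ℝ (fun j => X j t))
    -- index maps: `jdx` enumerates `{1, …, m-2}`, `last` is the index of `X_{m-1}`
    (jdx : Fin (m - 2) → Fin (m - 1)) (hjdx : ∀ j, (jdx j : ℕ) = (j : ℕ))
    (last : Fin (m - 1)) (hlast : (last : ℕ) = m - 2)
    -- the striction hypersurface `β`, built from a smooth function `s^{m-1}`
    (s : ℝ × (Fin (m - 2) → ℝ) → ℝ) (hs : ContDiff ℝ (⊤ : ℕ∞) s)
    (β : ℝ → (Fin (m - 2) → ℝ) → EuclideanSpace ℝ (Fin (m + n)))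
    (hβ : ∀ t u, β t u = γ t + (∑ j, u j • X (jdx j) t) + s (t, u) • X last t)
    (t : ℝ) (u : Fin (m - 2) → ℝ)
    -- the `m-1` partial derivatives of `β` at `(t, u)`
    (B : Fin (m - 2 + 1) → EuclideanSpace ℝ (Fin (m + n)))
    (hB : B = Matrix.vecCons (deriv (fun τ => β τ u) t)
      (fun j => deriv (fun r : ℝ => β t (u + r • (Pi.single j 1 : Fin (m - 2) → ℝ))) 0))
    (hdep : ¬ LinearIndependent ℝ
      (Matrix.vecCons (deriv (fun τ => β τ u) t) (fun i => X i t)))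
    (hreg : LinearIndependent ℝ B) :
    X last t ∈ Submodule.span ℝ (Set.range B) :=
  stmt_14_general m n γ X hON jdx last s β hβ t u B hB hdep hreg
end

section
/- Fix (t, u) ∈ ℝ × ℝ^{m−2}. If the m−1 partial derivatives of β at (t, u) (namely ∂β/∂t and ∂β/∂u^j for j = 1, …, m−2) are linearly dependent, then X_{m−1}(t) does not belong to their span, and the span of the partial derivatives of β at (t, u) has dimension exactly m − 2. (Hence, when its striction hypersurface is singular everywhere, a noncylindrical rank-one submanifold is a conical submanifold with vertex set the striction hypersurface.) -/
/-!
The partial derivative of `β` in `u^j` is `X_j + (∂s/∂u^j) X_{m-1}`. Together with `X_{m-1}`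
these vectors are a unitriangular shear of the orthonormal family `X_{m-1}, X_1, …, X_{m-2}`,
hence linearly independent: the `u`-derivatives are independent and `X_{m-1}` avoids their span.
A dependence among all `m-1` partial derivatives therefore puts `∂β/∂t` in the span of the
`m-2` others.
-/

open scoped RealInnerProductSpace

section
variable {E : Type*} [NormedAddCommGroup E] [InnerProductSpace ℝ E]

theorem Orthonormal.linearIndependent_cons_add_smul {ι : Type*} {e : ι → E}
    (he : Orthonormal ℝ e) {n : ℕ} {f : Fin n → ι} (hf : Function.Injective f) {i₀ : ι}
    (hi₀ : ∀ k, f k ≠ i₀) (c : Fin n → ℝ) :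
    LinearIndependent ℝ (Fin.cons (e i₀) fun k => e (f k) + c k • e i₀ : Fin (n + 1) → E) := by
  rw [Fintype.linearIndependent_iff]
  intro g hg
  have hsplit : ∑ k, g k.succ • (e (f k) + c k • e i₀)
      = ∑ k, g k.succ • e (f k) + (∑ k, g k.succ * c k) • e i₀ := by
    simp only [smul_add, Finset.sum_add_distrib, Finset.sum_smul, mul_smul]
  rw [Fin.sum_univ_succ] at hg
  simp only [Fin.cons_zero, Fin.cons_succ, hsplit] at hg
  have htail : ∀ k : Fin n, g k.succ = 0 := by
    intro k
    have hcoeff : ⟪e (f k), ∑ i, g i.succ • e (f i)⟫ = g k.succ :=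
      (he.comp f hf).inner_right_fintype (fun i => g i.succ) k
    simpa [inner_add_right, inner_smul_right, hcoeff, he.2 (hi₀ k)] using
      congrArg (⟪e (f k), ·⟫) hg
  have hhead : g 0 = 0 := by
    simp only [htail, zero_smul, Finset.sum_const_zero, zero_mul, add_zero] at hg
    exact (smul_eq_zero.mp hg).resolve_right (he.ne_zero i₀)
  exact fun i => Fin.cases hhead htail i

theorem hasDerivAt_add_sum_smul_add_smul {ι : Type*} [Fintype ι] [DecidableEq ι] (p : E)
    (v : ι → E) (w : E) {φ : (ι → ℝ) → ℝ} {u : ι → ℝ} (hφ : DifferentiableAt ℝ φ u) (j : ι) :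
    HasDerivAt (fun r : ℝ => p + ∑ k, (u + r • (Pi.single j 1 : ι → ℝ)) k • v k +
      φ (u + r • Pi.single j 1) • w) (v j + fderiv ℝ φ u (Pi.single j 1) • w) 0 := by
  have hline : HasDerivAt (fun r : ℝ => u + r • (Pi.single j 1 : ι → ℝ)) (Pi.single j 1) 0 := by
    simpa using ((hasDerivAt_id (0 : ℝ)).smul_const (Pi.single j 1 : ι → ℝ)).const_add u
  have hsum (r : ℝ) : ∑ k, (u + r • (Pi.single j 1 : ι → ℝ)) k • v k
      = ∑ k, u k • v k + r • v j := by
    simp [add_smul, Finset.sum_add_distrib, Pi.single_apply]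
  have hφline : HasDerivAt (fun r : ℝ => φ (u + r • Pi.single j 1))
      (fderiv ℝ φ u (Pi.single j 1)) 0 :=
    hφ.hasFDerivAt.comp_hasDerivAt_of_eq 0 hline (by simp)
  simp only [hsum]
  have hd := ((((hasDerivAt_id' (0 : ℝ)).smul_const (v j)).const_add
    (∑ k, u k • v k)).const_add p).add (hφline.smul_const w)
  rw [one_smul] at hd
  exact hd

end

theorem stmt_15_general (m n : ℕ)
    (γ : ℝ → EuclideanSpace ℝ (Fin (m + n)))
    (X : Fin (m - 1) → ℝ → EuclideanSpace ℝ (Fin (m + n)))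
    (hON : ∀ t, Orthonormal ℝ (fun j => X j t))
    -- index maps: `jdx` enumerates `{1, …, m-2}`, `last` is the index of `X_{m-1}`
    (jdx : Fin (m - 2) → Fin (m - 1)) (hjdx : ∀ j, (jdx j : ℕ) = (j : ℕ))
    (last : Fin (m - 1)) (hlast : (last : ℕ) = m - 2)
    -- the striction hypersurface `β`, built from a smooth function `s^{m-1}`
    (s : ℝ × (Fin (m - 2) → ℝ) → ℝ) (hs : ContDiff ℝ (⊤ : ℕ∞) s)
    (β : ℝ → (Fin (m - 2) → ℝ) → EuclideanSpace ℝ (Fin (m + n)))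
    (hβ : ∀ t u, β t u = γ t + (∑ j, u j • X (jdx j) t) + s (t, u) • X last t)
    (t : ℝ) (u : Fin (m - 2) → ℝ)
    -- the `m-1` partial derivatives of `β` at `(t, u)`
    (B : Fin (m - 2 + 1) → EuclideanSpace ℝ (Fin (m + n)))
    (hB : B = Matrix.vecCons (deriv (fun τ => β τ u) t)
      (fun j => deriv (fun r : ℝ => β t (u + r • (Pi.single j 1 : Fin (m - 2) → ℝ))) 0))
    (hdep : ¬ LinearIndependent ℝ B) :
    X last t ∉ Submodule.span ℝ (Set.range B) ∧
    Module.finrank ℝ (Submodule.span ℝ (Set.range B)) = m - 2 := by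
  have hjdx_inj : Function.Injective jdx := fun a b h => Fin.ext (by rw [← hjdx a, ← hjdx b, h])
  have hjdx_ne_last (j : Fin (m - 2)) : jdx j ≠ last := fun h => by
    have := hjdx j
    rw [h, hlast] at this
    omega
  have hsu : DifferentiableAt ℝ (fun u' => s (t, u')) u :=
    (hs.comp (contDiff_prodMk_right t)).differentiable (by simp) u
  set c : Fin (m - 2) → ℝ := fun j => fderiv ℝ (fun u' => s (t, u')) u (Pi.single j 1)
  set T : Fin (m - 2) → EuclideanSpace ℝ (Fin (m + n)) := fun j => X (jdx j) t + c j • X last t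
  have hBT : B = Fin.cons (deriv (fun τ => β τ u) t) T := by
    rw [hB]
    congr 1
    funext j
    simp only [hβ]
    exact (hasDerivAt_add_sum_smul_add_smul (γ t) (fun k => X (jdx k) t) (X last t) hsu j).deriv
  obtain ⟨hT, hlast_notMem⟩ := linearIndependent_finCons.mp
    ((hON t).linearIndependent_cons_add_smul hjdx_inj hjdx_ne_last c)
  have hβt_mem : deriv (fun τ => β τ u) t ∈ Submodule.span ℝ (Set.range T) := by
    by_contra h
    exact hdep (hBT ▸ linearIndependent_finCons.mpr ⟨hT, h⟩)
  have hspan : Submodule.span ℝ (Set.range B) = Submodule.span ℝ (Set.range T) := by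
    rw [hBT, Fin.range_cons, Submodule.span_insert_eq_span hβt_mem]
  rw [hspan, finrank_span_eq_card hT, Fintype.card_fin]
  exact ⟨hlast_notMem, rfl⟩

/-- Fix `(t,u) ∈ ℝ × ℝ^{m-2}`. If the `m-1` partial derivatives of `β` at
`(t,u)` are linearly dependent, then `X_{m-1}(t)` does not belong to their span, and the span
of the partial derivatives of `β` at `(t,u)` has dimension exactly `m-2`. (Hence, when its
striction hypersurface is singular everywhere, a noncylindrical rank-one submanifold is a
conical submanifold with vertex set the striction hypersurface.) -/
theorem stmt_15 (m n : ℕ) (hm : 2 ≤ m) (hn : 1 ≤ n)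
    (γ : ℝ → EuclideanSpace ℝ (Fin (m + n)))
    (X : Fin (m - 1) → ℝ → EuclideanSpace ℝ (Fin (m + n)))
    (hγ : ContDiff ℝ (⊤ : ℕ∞) γ) (hγ' : ∀ t, ‖deriv γ t‖ = 1)
    (hX : ∀ j, ContDiff ℝ (⊤ : ℕ∞) (X j))
    (hON : ∀ t, Orthonormal ℝ (fun j => X j t))
    -- index maps: `jdx` enumerates `{1, …, m-2}`, `last` is the index of `X_{m-1}`
    (jdx : Fin (m - 2) → Fin (m - 1)) (hjdx : ∀ j, (jdx j : ℕ) = (j : ℕ))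
    (last : Fin (m - 1)) (hlast : (last : ℕ) = m - 2)
    -- the striction hypersurface `β`, built from a smooth function `s^{m-1}`
    (s : ℝ × (Fin (m - 2) → ℝ) → ℝ) (hs : ContDiff ℝ (⊤ : ℕ∞) s)
    (β : ℝ → (Fin (m - 2) → ℝ) → EuclideanSpace ℝ (Fin (m + n)))
    (hβ : ∀ t u, β t u = γ t + (∑ j, u j • X (jdx j) t) + s (t, u) • X last t)
    (t : ℝ) (u : Fin (m - 2) → ℝ)
    -- the `m-1` partial derivatives of `β` at `(t, u)`
    (B : Fin (m - 2 + 1) → EuclideanSpace ℝ (Fin (m + n)))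
    (hB : B = Matrix.vecCons (deriv (fun τ => β τ u) t)
      (fun j => deriv (fun r : ℝ => β t (u + r • (Pi.single j 1 : Fin (m - 2) → ℝ))) 0))
    (hdep : ¬ LinearIndependent ℝ B) :
    X last t ∉ Submodule.span ℝ (Set.range B) ∧
    Module.finrank ℝ (Submodule.span ℝ (Set.range B)) = m - 2 :=
  stmt_15_general m n γ X hON jdx hjdx last hlast s hs β hβ t u B hB hdep
end
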